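/- arXiv:1610.09420 — 3 statements merged into one kernel-verified Lean document; each statement's English description precedes it below -/
import Mathlib

section
/- Let X^1,…,X^d ∈ ℝ^{n1×n2}, let 𝒜^t : ℝ^{n1×n2} → ℝ^{m_t} be linear operators, and suppose y^t = 𝒜^t(X^t) + z^t for some vectors z^t ∈ ℝ^{m_t}. Suppose rank(X^d) ≤ r, let w_1,…,w_d ≥ 0, and let X̂^d be any minimizer of L(X) = (1/2)·Σ_{t=1}^d w_t‖𝒜^t(X) − y^t‖_2² over {X ∈ ℝ^{n1×n2} : rank(X) ≤ r}. Then, setting Δ^d = X̂^d − X^d and h^t = 𝒜^t(X^d − X^t), one has Σ_{t=1}^d w_t‖𝒜^t(Δ^d)‖_2² ≤ 2√(2r)·‖Σ_{t=1}^d w_t 𝒜^{t*}(h^t − z^t)‖_2·‖Δ^d‖_F, where ‖·‖_2 applied to the matrix Σ_t w_t 𝒜^{t*}(h^t − z^t) is the spectral norm. The same inequality holds if the minimization is instead over {X : rank(X) ≤ r, ‖X‖_∞ ≤ a}, provided ‖X^d‖_∞ ≤ a. -/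
open MeasureTheory ProbabilityTheory Matrix Finset
open scoped NNReal
open scoped RealInnerProductSpace

noncomputable section

/-- Frobenius norm of a real matrix. -/
def frobNorm {n1 n2 : ℕ} (X : Matrix (Fin n1) (Fin n2) ℝ) : ℝ :=
  Real.sqrt (∑ i, ∑ j, (X i j) ^ 2)

/-- Spectral (operator) norm of a real matrix. -/
def specNorm {n1 n2 : ℕ} (X : Matrix (Fin n1) (Fin n2) ℝ) : ℝ :=
  ‖LinearMap.toContinuousLinearMap (Matrix.toEuclideanLin X)‖

/-- Entrywise max norm. -/
def infNorm {n1 n2 : ℕ} (X : Matrix (Fin n1) (Fin n2) ℝ) : ℝ :=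
  ⨆ i, ⨆ j, |X i j|

/-- The linear sensing operator determined by sensing matrices `A i`,
`[𝒜(X)]_i = ⟨A_i, X⟩`. -/
def senseOp {n1 n2 m : ℕ} (A : Fin m → Matrix (Fin n1) (Fin n2) ℝ)
    (X : Matrix (Fin n1) (Fin n2) ℝ) : EuclideanSpace ℝ (Fin m) :=
  WithLp.toLp 2 (fun i => ∑ j, ∑ k, A i j k * X j k)

/-- The adjoint of the sensing operator, `𝒜*(b) = Σ_i b_i A_i`. -/
def adjOp {n1 n2 m : ℕ} (A : Fin m → Matrix (Fin n1) (Fin n2) ℝ)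
    (b : EuclideanSpace ℝ (Fin m)) : Matrix (Fin n1) (Fin n2) ℝ :=
  ∑ i, b i • A i



lemma specNorm_nonneg {n1 n2 : ℕ} (M : Matrix (Fin n1) (Fin n2) ℝ) : 0 ≤ specNorm M :=
  norm_nonneg _

lemma specNorm_bound {n1 n2 : ℕ} (M : Matrix (Fin n1) (Fin n2) ℝ)
    (x : EuclideanSpace ℝ (Fin n2)) :
    ‖Matrix.toEuclideanLin M x‖ ≤ specNorm M * ‖x‖ :=
  (LinearMap.toContinuousLinearMap (Matrix.toEuclideanLin M)).le_opNorm x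

/-- transpose bound: ∑_j (∑_l M l j * u l)^2 ≤ specNorm M ^ 2 * ‖u‖ ^ 2 -/
lemma transpose_bound {n1 n2 : ℕ} (M : Matrix (Fin n1) (Fin n2) ℝ)
    (u : EuclideanSpace ℝ (Fin n1)) :
    ∑ j, (∑ l, M l j * u l) ^ 2 ≤ specNorm M ^ 2 * ‖u‖ ^ 2 := by
  set g : EuclideanSpace ℝ (Fin n2) :=
    (WithLp.equiv 2 (Fin n2 → ℝ)).symm (fun j => ∑ l, M l j * u l) with hg
  have hgj : ∀ j, g j = ∑ l, M l j * u l := fun j => rfl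
  have hnormg : ‖g‖ ^ 2 = ∑ j, (∑ l, M l j * u l) ^ 2 := by
    rw [EuclideanSpace.norm_eq, Real.sq_sqrt (by positivity)]
    simp [hgj, Real.norm_eq_abs, sq_abs]
  have hinner : ‖g‖ ^ 2 = (inner ℝ u (Matrix.toEuclideanLin M g) : ℝ) := by
    rw [hnormg]
    have hMg : ∀ l, (Matrix.toEuclideanLin M g) l = ∑ j, M l j * g j := by
      intro l
      simp [Matrix.toEuclideanLin_apply, Matrix.mulVec, dotProduct]
    simp only [PiLp.inner_apply, RCLike.inner_apply', starRingEnd_apply, star_trivial, hMg]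
    calc ∑ j, (∑ l, M l j * u l) ^ 2 = ∑ j, ∑ l, M l j * u l * g j := by
          refine Finset.sum_congr rfl fun j _ => ?_
          rw [sq, ← Finset.sum_mul, ← hgj]
      _ = ∑ l, u l * ∑ j, M l j * g j := by
          rw [Finset.sum_comm]
          refine Finset.sum_congr rfl fun l _ => ?_
          rw [Finset.mul_sum]
          exact Finset.sum_congr rfl fun j _ => by ring
  have hle : ‖g‖ ^ 2 ≤ ‖u‖ * (specNorm M * ‖g‖) := by
    calc ‖g‖ ^ 2 = (inner ℝ u (Matrix.toEuclideanLin M g) : ℝ) := hinner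
      _ ≤ ‖u‖ * ‖Matrix.toEuclideanLin M g‖ := real_inner_le_norm _ _
      _ ≤ ‖u‖ * (specNorm M * ‖g‖) := by
          exact mul_le_mul_of_nonneg_left (specNorm_bound M g) (norm_nonneg _)
  have hgle : ‖g‖ ≤ specNorm M * ‖u‖ := by
    rcases eq_or_lt_of_le (norm_nonneg g) with h0 | h0
    · rw [← h0]; exact mul_nonneg (specNorm_nonneg M) (norm_nonneg u)
    · have := hle
      rw [pow_two] at this
      nlinarith
  calc ∑ j, (∑ l, M l j * u l) ^ 2 = ‖g‖ ^ 2 := hnormg.symm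
    _ ≤ (specNorm M * ‖u‖) ^ 2 := by nlinarith [norm_nonneg g]
    _ = specNorm M ^ 2 * ‖u‖ ^ 2 := by ring


lemma frobNorm_nonneg {n1 n2 : ℕ} (X : Matrix (Fin n1) (Fin n2) ℝ) : 0 ≤ frobNorm X :=
  Real.sqrt_nonneg _

lemma frobNorm_sq {n1 n2 : ℕ} (X : Matrix (Fin n1) (Fin n2) ℝ) :
    frobNorm X ^ 2 = ∑ i, ∑ j, (X i j) ^ 2 := by
  rw [frobNorm, Real.sq_sqrt (by positivity)]

set_option maxHeartbeats 1000000 in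
lemma key_bound {n1 n2 : ℕ} (Δ M : Matrix (Fin n1) (Fin n2) ℝ) (k : ℕ)
    (V : Submodule ℝ (EuclideanSpace ℝ (Fin n1)))
    (hV : ∀ j, ((WithLp.equiv 2 (Fin n1 → ℝ)).symm (Δᵀ j)) ∈ V)
    (hfin : Module.finrank ℝ V ≤ k) :
    |∑ i, ∑ j, Δ i j * M i j| ≤ Real.sqrt k * specNorm M * frobNorm Δ := by
  set k' := Module.finrank ℝ ↥V with hk'
  set b := stdOrthonormalBasis ℝ ↥V with hb
  set c : Fin n2 → V := fun j => ⟨(WithLp.equiv 2 (Fin n1 → ℝ)).symm (Δᵀ j), hV j⟩ with hc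
  set rr : Fin k' → Fin n2 → ℝ := fun i j => b.repr (c j) i with hrr
  set u : Fin k' → EuclideanSpace ℝ (Fin n1) := fun i => (b i : EuclideanSpace ℝ (Fin n1))
    with hu
  have hunorm : ∀ i, ‖u i‖ = 1 := by
    intro i
    have := b.orthonormal.1 i
    exact this
  have hcol : ∀ l j, Δ l j = ∑ i, rr i j * u i l := by
    intro l j
    have h1 := b.sum_repr (c j)
    have h2 := congrArg
      (fun (x : V) => WithLp.equiv 2 (Fin n1 → ℝ) ((x : EuclideanSpace ℝ (Fin n1))) l) h1
    simp only [AddSubmonoidClass.coe_finset_sum] at h2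
    rw [show (WithLp.equiv 2 (Fin n1 → ℝ)) = (WithLp.linearEquiv 2 ℝ (Fin n1 → ℝ)).toEquiv
        from rfl] at h2
    simp only [LinearEquiv.coe_toEquiv, map_sum, Finset.sum_apply] at h2
    simpa [hc, hrr, hu, smul_eq_mul] using h2.symm
  have hpars : ∀ j, ∑ i, rr i j ^ 2 = ∑ l, Δ l j ^ 2 := by
    intro j
    have h1 : ‖b.repr (c j)‖ = ‖c j‖ := b.repr.norm_map (c j)
    have h2 : ‖b.repr (c j)‖ ^ 2 = ∑ i, rr i j ^ 2 := by
      rw [EuclideanSpace.norm_eq, Real.sq_sqrt (by positivity)]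
      simp [hrr, Real.norm_eq_abs, sq_abs]
      rfl
    have h3 : ‖c j‖ ^ 2 = ∑ l, Δ l j ^ 2 := by
      rw [← Submodule.norm_coe (c j)]
      rw [EuclideanSpace.norm_eq, Real.sq_sqrt (by positivity)]
      simp [hc, Real.norm_eq_abs, sq_abs]
    rw [← h2, h1, h3]
  set s : Fin k' → Fin n2 → ℝ := fun i j => ∑ l, M l j * u i l with hs
  have hS : ∑ i, ∑ j, Δ i j * M i j = ∑ p : Fin k' × Fin n2, rr p.1 p.2 * s p.1 p.2 := by
    calc ∑ l, ∑ j, Δ l j * M l j = ∑ j, ∑ l, Δ l j * M l j := Finset.sum_comm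
      _ = ∑ j, ∑ i, rr i j * s i j := by
          refine Finset.sum_congr rfl fun j _ => ?_
          calc ∑ l, Δ l j * M l j = ∑ l, ∑ i, rr i j * u i l * M l j := by
                refine Finset.sum_congr rfl fun l _ => ?_
                rw [hcol l j, Finset.sum_mul]
            _ = ∑ i, ∑ l, rr i j * u i l * M l j := Finset.sum_comm
            _ = ∑ i, rr i j * s i j := by
                refine Finset.sum_congr rfl fun i _ => ?_
                rw [hs, Finset.mul_sum]
                exact Finset.sum_congr rfl fun l _ => by ring
      _ = ∑ i, ∑ j, rr i j * s i j := Finset.sum_comm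
      _ = ∑ p : Fin k' × Fin n2, rr p.1 p.2 * s p.1 p.2 :=
          (Fintype.sum_prod_type (fun p : Fin k' × Fin n2 => rr p.1 p.2 * s p.1 p.2)).symm
  have hCS := Finset.sum_mul_sq_le_sq_mul_sq Finset.univ
      (fun p : Fin k' × Fin n2 => rr p.1 p.2) (fun p => s p.1 p.2)
  have hr2 : ∑ p : Fin k' × Fin n2, rr p.1 p.2 ^ 2 = frobNorm Δ ^ 2 := by
    calc ∑ p : Fin k' × Fin n2, rr p.1 p.2 ^ 2 = ∑ i, ∑ j, rr i j ^ 2 :=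
          Fintype.sum_prod_type (fun p : Fin k' × Fin n2 => rr p.1 p.2 ^ 2)
      _ = ∑ j, ∑ i, rr i j ^ 2 := Finset.sum_comm
      _ = ∑ j, ∑ l, Δ l j ^ 2 := Finset.sum_congr rfl fun j _ => hpars j
      _ = ∑ l, ∑ j, Δ l j ^ 2 := Finset.sum_comm
      _ = frobNorm Δ ^ 2 := (frobNorm_sq Δ).symm
  have hs2 : ∑ p : Fin k' × Fin n2, s p.1 p.2 ^ 2 ≤ (k' : ℝ) * specNorm M ^ 2 := by
    calc ∑ p : Fin k' × Fin n2, s p.1 p.2 ^ 2 = ∑ i, ∑ j, s i j ^ 2 :=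
          Fintype.sum_prod_type (fun p : Fin k' × Fin n2 => s p.1 p.2 ^ 2)
      _ ≤ ∑ _i : Fin k', specNorm M ^ 2 := Finset.sum_le_sum fun i _ => by
          simpa [hunorm i] using transpose_bound M (u i)
      _ = (k' : ℝ) * specNorm M ^ 2 := by
          simp [Finset.sum_const, nsmul_eq_mul]
  set S := ∑ i, ∑ j, Δ i j * M i j with hSdef
  have hSsq : S ^ 2 ≤ (Real.sqrt k * specNorm M * frobNorm Δ) ^ 2 := by
    have hkk : (k' : ℝ) ≤ (k : ℝ) := by exact_mod_cast hfin
    have hexp : (Real.sqrt k * specNorm M * frobNorm Δ) ^ 2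
        = (k : ℝ) * specNorm M ^ 2 * frobNorm Δ ^ 2 := by
      rw [mul_pow, mul_pow, Real.sq_sqrt (Nat.cast_nonneg k)]
    rw [hexp]
    calc S ^ 2 = (∑ p : Fin k' × Fin n2, rr p.1 p.2 * s p.1 p.2) ^ 2 := by rw [hS]
      _ ≤ (∑ p : Fin k' × Fin n2, rr p.1 p.2 ^ 2) * ∑ p : Fin k' × Fin n2, s p.1 p.2 ^ 2 :=
          hCS
      _ = frobNorm Δ ^ 2 * ∑ p : Fin k' × Fin n2, s p.1 p.2 ^ 2 := by rw [hr2]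
      _ ≤ frobNorm Δ ^ 2 * ((k' : ℝ) * specNorm M ^ 2) :=
          mul_le_mul_of_nonneg_left hs2 (sq_nonneg _)
      _ ≤ frobNorm Δ ^ 2 * ((k : ℝ) * specNorm M ^ 2) :=
          mul_le_mul_of_nonneg_left
            (mul_le_mul_of_nonneg_right hkk (sq_nonneg _)) (sq_nonneg _)
      _ = (k : ℝ) * specNorm M ^ 2 * frobNorm Δ ^ 2 := by ring
  have hrhs : 0 ≤ Real.sqrt k * specNorm M * frobNorm Δ :=
    mul_nonneg (mul_nonneg (Real.sqrt_nonneg _) (specNorm_nonneg M)) (frobNorm_nonneg Δ)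
  calc |S| = Real.sqrt (S ^ 2) := (Real.sqrt_sq_eq_abs S).symm
    _ ≤ Real.sqrt ((Real.sqrt k * specNorm M * frobNorm Δ) ^ 2) := Real.sqrt_le_sqrt hSsq
    _ = Real.sqrt k * specNorm M * frobNorm Δ := Real.sqrt_sq hrhs

lemma finrank_span_cols {n1 n2 : ℕ} (B : Matrix (Fin n1) (Fin n2) ℝ) :
    Module.finrank ℝ (Submodule.span ℝ
      (Set.range fun j => (WithLp.equiv 2 (Fin n1 → ℝ)).symm (Bᵀ j))) = B.rank := by
  rw [Matrix.rank_eq_finrank_span_cols]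
  let e : (Fin n1 → ℝ) ≃ₗ[ℝ] EuclideanSpace ℝ (Fin n1) :=
    (WithLp.linearEquiv 2 ℝ (Fin n1 → ℝ)).symm
  have hset : (Set.range fun j => (WithLp.equiv 2 (Fin n1 → ℝ)).symm (Bᵀ j))
      = e '' Set.range B.col := by
    rw [← Set.range_comp]; rfl
  rw [hset, ← LinearEquiv.coe_coe, ← Submodule.map_span]
  exact LinearEquiv.finrank_map_eq e _

/-- rank version of key bound, for a difference of two matrices. -/
lemma key_bound_sub {n1 n2 : ℕ} (B C M : Matrix (Fin n1) (Fin n2) ℝ) (r : ℕ)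
    (hB : B.rank ≤ r) (hC : C.rank ≤ r) :
    |∑ i, ∑ j, (B - C) i j * M i j|
      ≤ Real.sqrt (2 * r) * specNorm M * frobNorm (B - C) := by
  set VB := Submodule.span ℝ
      (Set.range fun j => (WithLp.equiv 2 (Fin n1 → ℝ)).symm (Bᵀ j)) with hVB
  set VC := Submodule.span ℝ
      (Set.range fun j => (WithLp.equiv 2 (Fin n1 → ℝ)).symm (Cᵀ j)) with hVC
  have hmem : ∀ j, (WithLp.equiv 2 (Fin n1 → ℝ)).symm ((B - C)ᵀ j) ∈ VB ⊔ VC := by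
    intro j
    have h1 : (WithLp.equiv 2 (Fin n1 → ℝ)).symm ((B - C)ᵀ j)
        = (WithLp.equiv 2 (Fin n1 → ℝ)).symm (Bᵀ j)
          - (WithLp.equiv 2 (Fin n1 → ℝ)).symm (Cᵀ j) := by
      ext l; rfl
    rw [h1]
    exact sub_mem
      (Submodule.mem_sup_left (Submodule.subset_span (Set.mem_range_self j)))
      (Submodule.mem_sup_right (Submodule.subset_span (Set.mem_range_self j)))
  have hfin : Module.finrank ℝ ↥(VB ⊔ VC) ≤ 2 * r := by
    have h1 := Submodule.finrank_sup_add_finrank_inf_eq VB VC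
    have h2 : Module.finrank ℝ ↥VB = B.rank := finrank_span_cols B
    have h3 : Module.finrank ℝ ↥VC = C.rank := finrank_span_cols C
    omega
  have := key_bound (B - C) M (2 * r) (VB ⊔ VC) hmem hfin
  simpa using this



lemma senseOp_sub {n1 n2 m : ℕ} (A : Fin m → Matrix (Fin n1) (Fin n2) ℝ)
    (X Y : Matrix (Fin n1) (Fin n2) ℝ) :
    senseOp A (X - Y) = senseOp A X - senseOp A Y := by
  ext i
  show (∑ j, ∑ k, A i j k * (X - Y) j k) = (senseOp A X) i - (senseOp A Y) i
  simp only [Matrix.sub_apply, mul_sub, Finset.sum_sub_distrib]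
  rfl

lemma inner_senseOp {n1 n2 m : ℕ} (A : Fin m → Matrix (Fin n1) (Fin n2) ℝ)
    (Δ : Matrix (Fin n1) (Fin n2) ℝ) (v : EuclideanSpace ℝ (Fin m)) :
    (inner ℝ (senseOp A Δ) v : ℝ) = ∑ j, ∑ k, Δ j k * adjOp A v j k := by
  have hadj : ∀ j k, adjOp A v j k = ∑ i, v i * A i j k := by
    intro j k
    simp [adjOp, Matrix.sum_apply]
  simp only [PiLp.inner_apply, RCLike.inner_apply', starRingEnd_apply, star_trivial, hadj]
  calc ∑ i, senseOp A Δ i * v i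
      = ∑ i, ∑ j, ∑ k, A i j k * Δ j k * v i := by
        refine Finset.sum_congr rfl fun i _ => ?_
        show (∑ j, ∑ k, A i j k * Δ j k) * v i = _
        rw [Finset.sum_mul]
        exact Finset.sum_congr rfl fun j _ => by rw [Finset.sum_mul]
    _ = ∑ j, ∑ i, ∑ k, A i j k * Δ j k * v i := Finset.sum_comm
    _ = ∑ j, ∑ k, ∑ i, A i j k * Δ j k * v i :=
        Finset.sum_congr rfl fun j _ => Finset.sum_comm
    _ = ∑ j, ∑ k, Δ j k * ∑ i, v i * A i j k := by
        refine Finset.sum_congr rfl fun j _ => Finset.sum_congr rfl fun k _ => ?_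
        rw [Finset.mul_sum]
        exact Finset.sum_congr rfl fun i _ => by ring

lemma main_step {n1 n2 d r : ℕ} (m : Fin d → ℕ)
    (A : (t : Fin d) → Fin (m t) → Matrix (Fin n1) (Fin n2) ℝ)
    (Xl : Matrix (Fin n1) (Fin n2) ℝ) (hrank : Xl.rank ≤ r)
    (v : (t : Fin d) → EuclideanSpace ℝ (Fin (m t)))
    (w : Fin d → ℝ)
    (Xhat : Matrix (Fin n1) (Fin n2) ℝ) (hr : Xhat.rank ≤ r)
    (hmin : ∑ t, w t * ‖senseOp (A t) (Xhat - Xl) + v t‖ ^ 2 ≤ ∑ t, w t * ‖v t‖ ^ 2) :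
    ∑ t, w t * ‖senseOp (A t) (Xhat - Xl)‖ ^ 2 ≤
      2 * Real.sqrt (2 * r) * specNorm (∑ t, w t • adjOp (A t) (v t)) *
        frobNorm (Xhat - Xl) := by
  set M0 := ∑ t, w t • adjOp (A t) (v t) with hM0
  set T := ∑ j, ∑ k, (Xhat - Xl) j k * M0 j k with hTdef
  have h1 : ∑ t, w t * ‖senseOp (A t) (Xhat - Xl)‖ ^ 2
      + 2 * ∑ t, w t * (inner ℝ (senseOp (A t) (Xhat - Xl)) (v t) : ℝ) ≤ 0 := by
    have he : ∑ t, w t * ‖senseOp (A t) (Xhat - Xl) + v t‖ ^ 2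
        = ∑ t, (w t * ‖senseOp (A t) (Xhat - Xl)‖ ^ 2
            + 2 * (w t * (inner ℝ (senseOp (A t) (Xhat - Xl)) (v t) : ℝ))
            + w t * ‖v t‖ ^ 2) := by
      refine Finset.sum_congr rfl fun t _ => ?_
      rw [norm_add_sq_real]; ring
    rw [he, Finset.sum_add_distrib, Finset.sum_add_distrib, ← Finset.mul_sum] at hmin
    linarith
  have hT : ∑ t, w t * (inner ℝ (senseOp (A t) (Xhat - Xl)) (v t) : ℝ) = T := by
    simp only [inner_senseOp]
    calc ∑ t, w t * ∑ j, ∑ k, (Xhat - Xl) j k * adjOp (A t) (v t) j k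
        = ∑ t, ∑ j, ∑ k, w t * ((Xhat - Xl) j k * adjOp (A t) (v t) j k) := by
          simp [Finset.mul_sum]
      _ = ∑ j, ∑ t, ∑ k, w t * ((Xhat - Xl) j k * adjOp (A t) (v t) j k) :=
          Finset.sum_comm
      _ = ∑ j, ∑ k, ∑ t, w t * ((Xhat - Xl) j k * adjOp (A t) (v t) j k) :=
          Finset.sum_congr rfl fun j _ => Finset.sum_comm
      _ = T := by
          rw [hTdef]
          refine Finset.sum_congr rfl fun j _ => Finset.sum_congr rfl fun k _ => ?_
          have hM0jk : M0 j k = ∑ t, w t * adjOp (A t) (v t) j k := by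
            simp [hM0, Matrix.sum_apply]
          rw [hM0jk, Finset.mul_sum]
          exact Finset.sum_congr rfl fun t _ => by ring
  have key := key_bound_sub Xhat Xl M0 r hr hrank
  rw [← hTdef] at key
  linarith [neg_abs_le T, le_abs_self T, abs_nonneg T]

/-- Proposition 1 (basic deterministic inequality for the LOWEMS estimator), for both the
rank-constrained program and the rank-plus-spikiness-constrained program. -/
theorem lowems_basic_inequality
    (n1 n2 d r : ℕ) (hd : 0 < d) (m : Fin d → ℕ)
    (A : (t : Fin d) → Fin (m t) → Matrix (Fin n1) (Fin n2) ℝ)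
    (X : Fin d → Matrix (Fin n1) (Fin n2) ℝ)
    (z : (t : Fin d) → EuclideanSpace ℝ (Fin (m t)))
    (y : (t : Fin d) → EuclideanSpace ℝ (Fin (m t)))
    (hy : ∀ t, y t = senseOp (A t) (X t) + z t)
    (w : Fin d → ℝ) (hw : ∀ t, 0 ≤ w t)
    (last : Fin d) (hlast : last = ⟨d - 1, Nat.sub_lt hd one_pos⟩)
    (hrank : (X last).rank ≤ r)
    (L : Matrix (Fin n1) (Fin n2) ℝ → ℝ)
    (hL : ∀ X', L X' = (1 / 2) * ∑ t, w t * ‖senseOp (A t) X' - y t‖ ^ 2)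
    (a : ℝ) (ha : infNorm (X last) ≤ a)
    (Xhat₁ : Matrix (Fin n1) (Fin n2) ℝ)
    (hXhat₁ : Xhat₁.rank ≤ r ∧ ∀ X', X'.rank ≤ r → L Xhat₁ ≤ L X')
    (Xhat₂ : Matrix (Fin n1) (Fin n2) ℝ)
    (hXhat₂ : (Xhat₂.rank ≤ r ∧ infNorm Xhat₂ ≤ a) ∧
      ∀ X', X'.rank ≤ r → infNorm X' ≤ a → L Xhat₂ ≤ L X')
    (h : (t : Fin d) → EuclideanSpace ℝ (Fin (m t)))
    (hh : ∀ t, h t = senseOp (A t) (X last - X t)) :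
    (∑ t, w t * ‖senseOp (A t) (Xhat₁ - X last)‖ ^ 2 ≤
      2 * Real.sqrt (2 * r) * specNorm (∑ t, w t • adjOp (A t) (h t - z t)) *
        frobNorm (Xhat₁ - X last)) ∧
    (∑ t, w t * ‖senseOp (A t) (Xhat₂ - X last)‖ ^ 2 ≤
      2 * Real.sqrt (2 * r) * specNorm (∑ t, w t • adjOp (A t) (h t - z t)) *
        frobNorm (Xhat₂ - X last)) := by
  have hveq : ∀ t, senseOp (A t) (X last) - y t = h t - z t := by
    intro t
    rw [hy t, hh t, senseOp_sub]
    abel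
  have hred : ∀ Xhat : Matrix (Fin n1) (Fin n2) ℝ, Xhat.rank ≤ r → L Xhat ≤ L (X last) →
      ∑ t, w t * ‖senseOp (A t) (Xhat - X last)‖ ^ 2 ≤
        2 * Real.sqrt (2 * r) * specNorm (∑ t, w t • adjOp (A t) (h t - z t)) *
          frobNorm (Xhat - X last) := by
    intro Xhat hr hmin
    have haeq : ∀ t, senseOp (A t) Xhat - y t
        = senseOp (A t) (Xhat - X last) + (h t - z t) := by
      intro t
      rw [senseOp_sub, ← hveq t]
      abel
    rw [hL, hL] at hmin
    have hmin' : ∑ t, w t * ‖senseOp (A t) (Xhat - X last) + (h t - z t)‖ ^ 2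
        ≤ ∑ t, w t * ‖h t - z t‖ ^ 2 := by
      have e1 : ∀ t, ‖senseOp (A t) Xhat - y t‖
          = ‖senseOp (A t) (Xhat - X last) + (h t - z t)‖ := fun t => by rw [haeq t]
      have e2 : ∀ t, ‖senseOp (A t) (X last) - y t‖ = ‖h t - z t‖ := fun t => by
        rw [hveq t]
      simp only [e1, e2] at hmin
      linarith
    exact main_step m A (X last) hrank (fun t => h t - z t) w Xhat hr hmin'
  exact ⟨hred Xhat₁ hXhat₁.1 (hXhat₁.2 (X last) hrank),
    hred Xhat₂ hXhat₂.1.1 (hXhat₂.2 (X last) hrank ha)⟩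
end
end

section
/- Let U ∈ ℝ^{n1×r} have orthonormal columns with ‖e_i^T U‖_2 ≤ μ0√r/√n1 for every row index i. For t = 2,…,d let ε^t ∈ ℝ^{n2×r} have i.i.d. N(0,σ2²) entries, for t = 1,…,d let Z^t ∈ ℝ^{n1×n2} have i.i.d. N(0,σ1²) entries, with all these Gaussian matrices mutually independent, and set F^t = U·(Σ_{s=t+1}^d ε^s)^T + Z^t. Let w_1,…,w_d ≥ 0. Then with probability at least 1 − 2·d·n1·exp(−n2): max_{1≤i≤n1} Σ_{t=1}^d w_t² Σ_{j=1}^{n2} (F^t_{ij})² ≤ 10·n2·Σ_{t=1}^d w_t²·( σ1² + (μ0²·r/n1)·(d−t)·σ2² ). -/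
open MeasureTheory ProbabilityTheory Matrix Finset
open scoped NNReal ENNReal
open Real

noncomputable section

/-- Index type for the scalar Gaussian sources: entries of the perturbations `ε^t`,
`t ≥ 2` (left; time steps `0`-indexed, so `1 ≤ t`) and entries of the noise matrices
`Z^t` (right). -/
abbrev NoiseGaussIdx (d n1 n2 r : ℕ) : Type :=
  ({t : Fin d // 1 ≤ t.val} × Fin n2 × Fin r) ⊕ (Fin d × Fin n1 × Fin n2)

/-- Variances of the scalar Gaussian sources. -/
def noiseGaussVar (d n1 n2 r : ℕ) (σ1 σ2 : ℝ≥0) : NoiseGaussIdx d n1 n2 r → ℝ≥0 :=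
  Sum.elim (fun _ => σ2 ^ 2) (fun _ => σ1 ^ 2)

theorem lintegral_pi_prod_fin {n : ℕ} {E : Fin n → Type*}
    [∀ i, MeasurableSpace (E i)] (μ : ∀ i, Measure (E i)) [∀ i, SigmaFinite (μ i)]
    (f : ∀ i, E i → ℝ≥0∞) (hf : ∀ i, Measurable (f i)) :
    ∫⁻ x : ∀ i, E i, ∏ i, f i (x i) ∂Measure.pi μ = ∏ i, ∫⁻ x, f i x ∂μ i := by
  induction n with
  | zero =>
      simp [Measure.pi_of_empty, lintegral_dirac]
  | succ n n_ih =>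
      have hmp := (measurePreserving_piFinSuccAbove μ 0).symm
      have hmeas : Measurable fun x : ∀ i, E i => ∏ i, f i (x i) :=
        Finset.measurable_prod _ (fun i _ => (hf i).comp (measurable_pi_apply i))
      rw [← hmp.lintegral_comp hmeas]
      simp_rw [MeasurableEquiv.piFinSuccAbove_symm_apply, Fin.insertNthEquiv,
        Fin.prod_univ_succ, Fin.insertNth_zero]
      simp only [Fin.zero_succAbove, Function.comp_def, Fin.cons_zero, Fin.cons_succ,
        Equiv.coe_fn_mk, cast_eq]
      change ∫⁻ a : E 0 × (∀ j : Fin n, E (Fin.succ j)), f 0 a.1 * ∏ x : Fin n, f (Fin.succ x) (a.2 x) ∂(μ 0).prod (Measure.pi fun j => μ j.succ) = _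
      have hG : Measurable fun y : ∀ j : Fin n, E (Fin.succ j) => ∏ j, f (Fin.succ j) (y j) :=
        Finset.measurable_prod _ (fun i _ => (hf _).comp (measurable_pi_apply i))
      rw [lintegral_prod _ (Measurable.aemeasurable (show Measurable fun a : E 0 × (∀ j : Fin n, E (Fin.succ j)) => f 0 a.1 * ∏ x : Fin n, f (Fin.succ x) (a.2 x) from ((hf 0).comp measurable_fst).mul (hG.comp measurable_snd)))]
      simp only
      simp_rw [lintegral_const_mul _ hG]
      rw [lintegral_mul_const _ (hf 0), n_ih (fun j => μ (Fin.succ j)) _ (fun j => hf _)]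

theorem lintegral_pi_prod {ι : Type*} [Fintype ι] {E : ι → Type*}
    [∀ i, MeasurableSpace (E i)] (μ : ∀ i, Measure (E i)) [∀ i, SigmaFinite (μ i)]
    (f : ∀ i, E i → ℝ≥0∞) (hf : ∀ i, Measurable (f i)) :
    ∫⁻ x : ∀ i, E i, ∏ i, f i (x i) ∂Measure.pi μ = ∏ i, ∫⁻ x, f i x ∂μ i := by
  let e := (Fintype.equivFin ι).symm
  have hmeas : Measurable fun x : ∀ i, E i => ∏ i, f i (x i) :=
    Finset.measurable_prod _ (fun i _ => (hf i).comp (measurable_pi_apply i))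
  rw [← (measurePreserving_piCongrLeft μ e).lintegral_comp hmeas]
  simp_rw [MeasurableEquiv.coe_piCongrLeft, ← e.prod_comp, Equiv.piCongrLeft_apply_apply]
  rw [lintegral_pi_prod_fin (fun i' => μ (e i')) _ (fun i' => hf (e i'))]

lemma gauss_pdf_shift (c : ℝ) (v : ℝ≥0) (hv : v ≠ 0) (x : ℝ) :
    gaussianPDFReal 0 v x * Real.exp (c * x) =
      Real.exp (c ^ 2 * v / 2) * gaussianPDFReal (c * v) v x := by
  have hv' : (v : ℝ) ≠ 0 := NNReal.coe_ne_zero.2 hv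
  have hexp : -(x - 0) ^ 2 / (2 * (v : ℝ)) + c * x
      = c ^ 2 * v / 2 + -(x - c * v) ^ 2 / (2 * (v : ℝ)) := by
    field_simp
    ring
  calc gaussianPDFReal 0 v x * Real.exp (c * x)
      = (Real.sqrt (2 * π * v))⁻¹ * Real.exp (-(x - 0) ^ 2 / (2 * v) + c * x) := by
        rw [gaussianPDFReal, mul_assoc, ← Real.exp_add]
    _ = Real.exp (c ^ 2 * v / 2) * gaussianPDFReal (c * v) v x := by
        rw [hexp, Real.exp_add, gaussianPDFReal]; ring

lemma lintegral_exp_mul_gaussian (c : ℝ) (v : ℝ≥0) :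
    ∫⁻ x, ENNReal.ofReal (Real.exp (c * x)) ∂(gaussianReal 0 v) =
      ENNReal.ofReal (Real.exp (c ^ 2 * v / 2)) := by
  have hm : Measurable fun x : ℝ => ENNReal.ofReal (Real.exp (c * x)) := by fun_prop
  rcases eq_or_ne v 0 with h | h
  · subst h
    rw [gaussianReal_zero_var, lintegral_dirac' _ hm]
    simp
  · rw [gaussianReal_of_var_ne_zero _ h,
      lintegral_withDensity_eq_lintegral_mul _ (measurable_gaussianPDF _ _) hm]
    have key : ∀ x : ℝ, gaussianPDF 0 v x * ENNReal.ofReal (Real.exp (c * x)) =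
        ENNReal.ofReal (Real.exp (c ^ 2 * v / 2)) * gaussianPDF (c * v) v x := by
      intro x
      rw [gaussianPDF, gaussianPDF, ← ENNReal.ofReal_mul (gaussianPDFReal_nonneg _ _ _),
        ← ENNReal.ofReal_mul (Real.exp_nonneg _), gauss_pdf_shift c v h x]
    simp only [Pi.mul_apply]
    simp_rw [key]
    rw [lintegral_const_mul _ (measurable_gaussianPDF _ _), lintegral_gaussianPDF_eq_one _ h,
      mul_one]

lemma lintegral_exp_sq_gaussian :
    ∫⁻ x, ENNReal.ofReal (Real.exp ((2 / 5) * x ^ 2)) ∂(gaussianReal 0 1) =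
      ENNReal.ofReal (Real.sqrt 5) := by
  have hm : Measurable fun x : ℝ => ENNReal.ofReal (Real.exp ((2 / 5) * x ^ 2)) := by fun_prop
  rw [gaussianReal_of_var_ne_zero _ one_ne_zero,
    lintegral_withDensity_eq_lintegral_mul _ (measurable_gaussianPDF _ _) hm]
  have key : ∀ x : ℝ, gaussianPDF 0 1 x * ENNReal.ofReal (Real.exp ((2 / 5) * x ^ 2)) =
      ENNReal.ofReal ((Real.sqrt (2 * π))⁻¹ * Real.exp (-(1 / 10) * x ^ 2)) := by
    intro x
    rw [gaussianPDF, ← ENNReal.ofReal_mul (gaussianPDFReal_nonneg _ _ _), gaussianPDFReal]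
    rw [mul_assoc, ← Real.exp_add]
    norm_num
    congr 1
    ring
  simp only [Pi.mul_apply]
  simp_rw [key]
  rw [← ofReal_integral_eq_lintegral_ofReal]
  · rw [integral_const_mul, integral_gaussian]
    congr 1
    have h1 : π / (1 / 10) = 5 * (2 * π) := by ring
    rw [h1, Real.sqrt_mul (by norm_num : (0:ℝ) ≤ 5)]
    rw [mul_comm, mul_assoc, mul_inv_cancel₀ (by positivity : Real.sqrt (2 * π) ≠ 0), mul_one]
  · exact (integrable_exp_neg_mul_sq (by norm_num : (0:ℝ) < 1/10)).const_mul _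
  · exact Filter.Eventually.of_forall fun x => by positivity

lemma sq_sum_of_disjoint {β : Type*} [Fintype β] (x : β → ℝ)
    (h : ∀ j j', x j ≠ 0 → x j' ≠ 0 → j = j') :
    (∑ j, x j) ^ 2 = ∑ j, (x j) ^ 2 := by
  by_cases hx : ∃ j0, x j0 ≠ 0
  · obtain ⟨j0, hj0⟩ := hx
    have h1 : ∑ j, x j = x j0 :=
      Finset.sum_eq_single j0
        (fun b _ hb => by_contra fun hxb => hb (h b j0 hxb hj0)) (fun hj => absurd (mem_univ j0) hj)
    have h2 : ∑ j, (x j) ^ 2 = (x j0) ^ 2 :=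
      Finset.sum_eq_single j0
        (fun b _ hb => by
          have : x b = 0 := by_contra fun hxb => hb (h b j0 hxb hj0)
          simp [this])
        (fun hj => absurd (mem_univ j0) hj)
    rw [h1, h2]
  · push_neg at hx
    simp [hx]

theorem master_gauss_bound {ι : Type*} [Fintype ι] (V : ι → ℝ≥0) {n : ℕ} (A : Fin n → ι → ℝ)
    (hdisj : ∀ m j j', A j m ≠ 0 → A j' m ≠ 0 → j = j')
    (v : ℝ) (hv : 0 ≤ v) (hrow : ∀ j, ∑ m, (A j m) ^ 2 * (V m : ℝ) ≤ v) :
    (Measure.pi fun m => gaussianReal 0 (V m))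
      {g | 10 * n * v < ∑ j, (∑ m, A j m * g m) ^ 2} ≤
      ENNReal.ofReal (2 * Real.exp (-(n : ℝ))) := by
  classical
  set π' : Measure (ι → ℝ) := Measure.pi fun m => gaussianReal 0 (V m) with hπ'
  have hfmeas : ∀ j : Fin n, Measurable fun g : ι → ℝ => ∑ m, A j m * g m :=
    fun j => Finset.measurable_sum _ fun m _ => (measurable_pi_apply m).const_mul _
  rcases eq_or_lt_of_le hv with hv0 | hvpos
  · -- v = 0 case
    have hzero : ∀ j m, A j m ≠ 0 → V m = 0 := by
      intro j m hA
      have hle := hrow j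
      rw [← hv0] at hle
      have hterm : ∀ m' ∈ (univ : Finset ι), (0:ℝ) ≤ (A j m') ^ 2 * (V m' : ℝ) :=
        fun m' _ => mul_nonneg (sq_nonneg _) (V m').coe_nonneg
      have h0 : (A j m) ^ 2 * (V m : ℝ) = 0 := by
        have := Finset.sum_le_sum hterm  -- not directly; use le_antisymm via single term ≤ sum
        have hsingle : (A j m) ^ 2 * (V m : ℝ) ≤ ∑ m', (A j m') ^ 2 * (V m' : ℝ) :=
          Finset.single_le_sum hterm (mem_univ m)
        nlinarith [mul_nonneg (sq_nonneg (A j m)) (V m).coe_nonneg]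
      have hA2 : (0:ℝ) < (A j m) ^ 2 := by positivity
      have : (V m : ℝ) = 0 := by
        by_contra hne
        have : (0:ℝ) < (V m : ℝ) := lt_of_le_of_ne (V m).coe_nonneg (Ne.symm hne)
        nlinarith
      exact_mod_cast this
    refine le_trans ?_ (le_trans (le_refl (0 : ℝ≥0∞)) ?_)
    · have hsub : {g : ι → ℝ | 10 * n * v < ∑ j, (∑ m, A j m * g m) ^ 2} ⊆
          ⋃ m : ι, {g : ι → ℝ | V m = 0 ∧ g m ≠ 0} := by
        intro g hg
        by_contra hnot
        simp only [Set.mem_iUnion, Set.mem_setOf_eq, not_exists, not_and, not_not] at hnot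
        have : ∀ j, ∑ m, A j m * g m = 0 := by
          intro j
          refine Finset.sum_eq_zero fun m _ => ?_
          by_cases hA : A j m = 0
          · simp [hA]
          · rw [hnot m (hzero j m hA), mul_zero]
        simp only [Set.mem_setOf_eq] at hg
        rw [← hv0] at hg
        simp only [mul_zero] at hg
        refine absurd hg (not_lt.2 ?_)
        refine le_of_eq (Finset.sum_eq_zero fun j _ => ?_)
        rw [this j]; ring
      refine le_trans (measure_mono hsub) (le_trans (measure_iUnion_le _) ?_)
      have hone : ∀ m : ι, π' {g : ι → ℝ | V m = 0 ∧ g m ≠ 0} = 0 := by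
        intro m
        by_cases hVm : V m = 0
        · have hset : {g : ι → ℝ | V m = 0 ∧ g m ≠ 0} ⊆
              Set.univ.pi (fun m' => if m' = m then ({0}ᶜ : Set ℝ) else Set.univ) := by
            intro g hg m' _
            by_cases hm' : m' = m
            · subst hm'; simp only [if_pos rfl]; exact hg.2
            · simp [hm']
          refine le_antisymm (le_trans (measure_mono hset) ?_) zero_le
          rw [hπ', Measure.pi_pi]
          refine le_of_eq (Finset.prod_eq_zero (mem_univ m) ?_)
          rw [if_pos rfl, hVm, gaussianReal_zero_var]
          rw [Measure.dirac_apply' _ (MeasurableSet.compl (measurableSet_singleton 0))]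
          simp
        · have hset : {g : ι → ℝ | V m = 0 ∧ g m ≠ 0} = ∅ := by
            ext g; simp [hVm]
          rw [hset, measure_empty]
      simp [hone]
    · exact zero_le
  · -- v > 0 case
    have hvne : v ≠ 0 := ne_of_gt hvpos
    set l : ℝ := 2 / (5 * v) with hl_def
    have hl : 0 < l := by positivity
    set b : ℝ := Real.sqrt (2 * l) with hb_def
    have hb2 : b ^ 2 = 2 * l := Real.sq_sqrt (by positivity)
    set S : (ι → ℝ) → ℝ := fun g => ∑ j, (∑ m, A j m * g m) ^ 2 with hS_def
    have hSmeas : Measurable S := Finset.measurable_sum _ fun j _ => ((hfmeas j).pow_const 2)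
    have hexpmeas : Measurable fun g => ENNReal.ofReal (Real.exp (l * S g)) :=
      ENNReal.measurable_ofReal.comp (Real.measurable_exp.comp (hSmeas.const_mul l))
    set a : ℝ := 10 * n * v with ha_def
    have ha : 0 ≤ a := by positivity
    set ε : ℝ≥0∞ := ENNReal.ofReal (Real.exp (l * a)) with hε_def
    have hεpos : ε ≠ 0 := (ENNReal.ofReal_pos.2 (Real.exp_pos _)).ne'
    have hεtop : ε ≠ ⊤ := ENNReal.ofReal_ne_top
    have hsub : {g : ι → ℝ | a < S g} ⊆
        {g : ι → ℝ | ε ≤ ENNReal.ofReal (Real.exp (l * S g))} := fun g hg =>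
      ENNReal.ofReal_le_ofReal (Real.exp_le_exp.2
        (mul_le_mul_of_nonneg_left (le_of_lt hg) hl.le))
    have key1 : π' {g : ι → ℝ | a < S g} ≤
        ε⁻¹ * ∫⁻ g, ENNReal.ofReal (Real.exp (l * S g)) ∂π' := by
      calc π' {g : ι → ℝ | a < S g}
          ≤ π' {g : ι → ℝ | ε ≤ ENNReal.ofReal (Real.exp (l * S g))} := measure_mono hsub
        _ = ε⁻¹ * (ε * π' {g : ι → ℝ | ε ≤ ENNReal.ofReal (Real.exp (l * S g))}) := by
            rw [← mul_assoc, ENNReal.inv_mul_cancel hεpos hεtop, one_mul]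
        _ ≤ ε⁻¹ * ∫⁻ g, ENNReal.ofReal (Real.exp (l * S g)) ∂π' :=
            mul_le_mul_right (mul_meas_ge_le_lintegral₀ hexpmeas.aemeasurable ε) _
    set Γ : Measure (Fin n → ℝ) := Measure.pi fun _ => gaussianReal 0 1 with hΓ_def
    have hbsq : ∀ y : ℝ, (b * y) ^ 2 * ((1:ℝ≥0):ℝ) / 2 = l * y ^ 2 := fun y => by
      rw [NNReal.coe_one, mul_pow, hb2]; ring
    have step1 : ∀ g : ι → ℝ, ENNReal.ofReal (Real.exp (l * S g)) =
        ∫⁻ ξ, ∏ j, ENNReal.ofReal (Real.exp (b * (∑ m, A j m * g m) * ξ j)) ∂Γ := by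
      intro g
      rw [hΓ_def, lintegral_pi_prod _
        (fun j (x : ℝ) => ENNReal.ofReal (Real.exp (b * (∑ m, A j m * g m) * x)))
        (fun j => by fun_prop)]
      simp_rw [lintegral_exp_mul_gaussian, hbsq]
      rw [← ENNReal.ofReal_prod_of_nonneg (fun j _ => Real.exp_nonneg _), ← Real.exp_sum,
        hS_def, Finset.mul_sum]
    have humeas : Measurable (Function.uncurry fun (g : ι → ℝ) (ξ : Fin n → ℝ) =>
        ∏ j, ENNReal.ofReal (Real.exp (b * (∑ m, A j m * g m) * ξ j))) := by
      refine Finset.measurable_prod _ fun j _ => ?_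
      refine ENNReal.measurable_ofReal.comp (Real.measurable_exp.comp ?_)
      exact (((hfmeas j).comp measurable_fst).const_mul b).mul
        ((measurable_pi_apply j).comp measurable_snd)
    have hInt : (∫⁻ g, ENNReal.ofReal (Real.exp (l * S g)) ∂π') =
        ∫⁻ ξ, ∫⁻ g, ∏ j, ENNReal.ofReal (Real.exp (b * (∑ m, A j m * g m) * ξ j)) ∂π' ∂Γ := by
      simp_rw [step1]
      exact lintegral_lintegral_swap humeas.aemeasurable
    have inner_le : ∀ ξ : Fin n → ℝ,
        (∫⁻ g, ∏ j, ENNReal.ofReal (Real.exp (b * (∑ m, A j m * g m) * ξ j)) ∂π') ≤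
          ENNReal.ofReal (Real.exp (∑ j, (2 / 5) * (ξ j) ^ 2)) := by
      intro ξ
      have rearr : ∀ g : ι → ℝ, ∏ j, ENNReal.ofReal (Real.exp (b * (∑ m, A j m * g m) * ξ j))
          = ∏ m, ENNReal.ofReal (Real.exp ((b * ∑ j, ξ j * A j m) * g m)) := by
        intro g
        rw [← ENNReal.ofReal_prod_of_nonneg (fun _ _ => Real.exp_nonneg _), ← Real.exp_sum,
            ← ENNReal.ofReal_prod_of_nonneg (fun _ _ => Real.exp_nonneg _), ← Real.exp_sum]
        congr 1
        simp_rw [Finset.mul_sum, Finset.sum_mul]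
        rw [Finset.sum_comm]
        congr 1
        exact Finset.sum_congr rfl fun m _ => Finset.sum_congr rfl fun j _ => by ring
      simp_rw [rearr]
      rw [hπ', lintegral_pi_prod _
        (fun m (x : ℝ) => ENNReal.ofReal (Real.exp ((b * ∑ j, ξ j * A j m) * x)))
        (fun m => by fun_prop)]
      simp_rw [lintegral_exp_mul_gaussian]
      rw [← ENNReal.ofReal_prod_of_nonneg (fun _ _ => Real.exp_nonneg _), ← Real.exp_sum]
      apply ENNReal.ofReal_le_ofReal
      apply Real.exp_le_exp.2
      have hCm : ∀ m, (b * ∑ j, ξ j * A j m) ^ 2 = 2 * l * ∑ j, (ξ j) ^ 2 * (A j m) ^ 2 := by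
        intro m
        rw [mul_pow, hb2, sq_sum_of_disjoint (fun j => ξ j * A j m)
          (fun j j' hj hj' => hdisj m j j'
            (fun h => hj (by simp [h])) (fun h => hj' (by simp [h])))]
        congr 1
        exact Finset.sum_congr rfl fun j _ => by ring
      calc ∑ m, (b * ∑ j, ξ j * A j m) ^ 2 * ((V m : ℝ)) / 2
          = ∑ j, l * (ξ j) ^ 2 * ∑ m, (A j m) ^ 2 * (V m : ℝ) := by
            have hterm : ∀ m, (b * ∑ j, ξ j * A j m) ^ 2 * ((V m : ℝ)) / 2
                = ∑ j, l * (ξ j) ^ 2 * ((A j m) ^ 2 * (V m : ℝ)) := by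
              intro m
              rw [hCm, Finset.mul_sum, Finset.sum_mul, Finset.sum_div]
              exact Finset.sum_congr rfl fun j _ => by ring
            simp_rw [hterm]
            rw [Finset.sum_comm]
            exact Finset.sum_congr rfl fun j _ => by rw [← Finset.mul_sum]
        _ ≤ ∑ j, (2 / 5) * (ξ j) ^ 2 := by
            refine Finset.sum_le_sum fun j _ => ?_
            have h1 : l * (ξ j) ^ 2 * (∑ m, (A j m) ^ 2 * (V m : ℝ)) ≤ l * (ξ j) ^ 2 * v :=
              mul_le_mul_of_nonneg_left (hrow j) (by positivity)
            have hlv : l * v = 2 / 5 := by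
              rw [hl_def]; field_simp
            calc l * (ξ j) ^ 2 * ∑ m, (A j m) ^ 2 * (V m : ℝ) ≤ l * (ξ j) ^ 2 * v := h1
              _ = (2 / 5) * (ξ j) ^ 2 := by rw [mul_comm (l * (ξ j)^2) v, ← mul_assoc,
                    mul_comm v l, hlv]
    have step4 : (∫⁻ ξ, ENNReal.ofReal (Real.exp (∑ j, (2 / 5) * (ξ j) ^ 2)) ∂Γ) =
        ENNReal.ofReal (Real.sqrt 5) ^ n := by
      simp_rw [Real.exp_sum, ENNReal.ofReal_prod_of_nonneg
        (fun (j : Fin n) (_ : j ∈ univ) => Real.exp_nonneg ((2/5) * _))]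
      rw [hΓ_def, lintegral_pi_prod _
        (fun (j : Fin n) (x : ℝ) => ENNReal.ofReal (Real.exp ((2 / 5) * x ^ 2)))
        (fun j => by fun_prop)]
      simp_rw [lintegral_exp_sq_gaussian]
      rw [Finset.prod_const, Finset.card_univ, Fintype.card_fin]
    have hnum : ε⁻¹ * ENNReal.ofReal (Real.sqrt 5) ^ n ≤
        ENNReal.ofReal (2 * Real.exp (-(n : ℝ))) := by
      have hla : l * a = 4 * n := by
        rw [hl_def, ha_def]; field_simp; ring
      have hεinv : ε⁻¹ = ENNReal.ofReal (Real.exp (-(4 * (n:ℝ)))) := by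
        rw [hε_def, hla, ← ENNReal.ofReal_inv_of_pos (Real.exp_pos _), ← Real.exp_neg]
      rw [hεinv, ← ENNReal.ofReal_pow (Real.sqrt_nonneg 5),
        ← ENNReal.ofReal_mul (Real.exp_nonneg _)]
      apply ENNReal.ofReal_le_ofReal
      have h3 : Real.sqrt 5 ≤ Real.exp 3 := by
        have h9 : Real.sqrt 5 ≤ 3 := by
          rw [show (3:ℝ) = Real.sqrt 9 by
            rw [show (9:ℝ) = 3 ^ 2 by norm_num, Real.sqrt_sq (by norm_num : (0:ℝ) ≤ 3)]]
          exact Real.sqrt_le_sqrt (by norm_num)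
        have := Real.add_one_le_exp (3:ℝ)
        linarith
      have hpow : Real.sqrt 5 ^ n ≤ Real.exp 3 ^ n :=
        pow_le_pow_left₀ (Real.sqrt_nonneg 5) h3 n
      have hexp3 : Real.exp 3 ^ n = Real.exp (3 * n) := by
        rw [← Real.exp_nat_mul]; ring_nf
      calc Real.exp (-(4 * (n:ℝ))) * Real.sqrt 5 ^ n
          ≤ Real.exp (-(4 * (n:ℝ))) * Real.exp (3 * n) := by
            exact mul_le_mul_of_nonneg_left (hexp3 ▸ hpow) (Real.exp_nonneg _)
        _ = Real.exp (-(n:ℝ)) := by rw [← Real.exp_add]; ring_nf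
        _ ≤ 2 * Real.exp (-(n:ℝ)) := by nlinarith [Real.exp_nonneg (-(n:ℝ))]
    calc π' {g : ι → ℝ | a < S g}
        ≤ ε⁻¹ * ∫⁻ g, ENNReal.ofReal (Real.exp (l * S g)) ∂π' := key1
      _ = ε⁻¹ * ∫⁻ ξ, ∫⁻ g, ∏ j, ENNReal.ofReal
            (Real.exp (b * (∑ m, A j m * g m) * ξ j)) ∂π' ∂Γ := by rw [hInt]
      _ ≤ ε⁻¹ * ∫⁻ ξ, ENNReal.ofReal (Real.exp (∑ j, (2 / 5) * (ξ j) ^ 2)) ∂Γ :=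
          mul_le_mul_right (lintegral_mono inner_le) _
      _ = ε⁻¹ * ENNReal.ofReal (Real.sqrt 5) ^ n := by rw [step4]
      _ ≤ ENNReal.ofReal (2 * Real.exp (-(n : ℝ))) := hnum


/-- Row-wise second moment bound for the noise matrices `F^t = U (Σ_{s>t} ε^s)ᵀ + Z^t`,
when `U` has `μ0`-incoherent rows. -/
theorem noise_matrix_row_sums_bound
    (Ω : Type) [MeasureSpace Ω] [IsProbabilityMeasure (ℙ : Measure Ω)]
    (d n1 n2 r : ℕ) (σ1 σ2 : ℝ≥0) (μ0 : ℝ)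
    (U : Matrix (Fin n1) (Fin r) ℝ)
    (hU : Uᵀ * U = 1)
    (hUinc : ∀ i, Real.sqrt (∑ k, (U i k) ^ 2) ≤ μ0 * Real.sqrt r / Real.sqrt n1)
    (ε : {t : Fin d // 1 ≤ t.val} → Ω → Matrix (Fin n2) (Fin r) ℝ)
    (Z : Fin d → Ω → Matrix (Fin n1) (Fin n2) ℝ)
    -- the Gaussian sources are mutually independent with the stated variances
    (hGauss : Measure.map (fun ω =>
        (Sum.elim (fun q : {t : Fin d // 1 ≤ t.val} × Fin n2 × Fin r => ε q.1 ω q.2.1 q.2.2)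
          (fun q : Fin d × Fin n1 × Fin n2 => Z q.1 ω q.2.1 q.2.2) :
          NoiseGaussIdx d n1 n2 r → ℝ)) ℙ
      = Measure.pi (fun g => gaussianReal 0 (noiseGaussVar d n1 n2 r σ1 σ2 g)))
    (F : Fin d → Ω → Matrix (Fin n1) (Fin n2) ℝ)
    (hF : ∀ t ω, F t ω = U * (∑ s : {s : Fin d // 1 ≤ s.val},
        if t.val < s.1.val then ε s ω else 0)ᵀ + Z t ω)
    (w : Fin d → ℝ) (hw : ∀ t, 0 ≤ w t) :
    1 - 2 * d * (n1 : ℝ) * Real.exp (-(n2 : ℝ)) ≤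
      (ℙ {ω | ∀ i : Fin n1,
        (∑ t, (w t) ^ 2 * ∑ j, (F t ω i j) ^ 2) ≤
          10 * (n2 : ℝ) * ∑ t : Fin d, (w t) ^ 2 * ((σ1 : ℝ) ^ 2 +
            (μ0 ^ 2 * (r : ℝ) / (n1 : ℝ)) * ((d : ℝ) - 1 - (t.val : ℝ)) *
              (σ2 : ℝ) ^ 2)}).toReal := by
  classical
  set Vfun : NoiseGaussIdx d n1 n2 r → ℝ≥0 := noiseGaussVar d n1 n2 r σ1 σ2 with hVfun_def
  set Φ : Ω → (NoiseGaussIdx d n1 n2 r → ℝ) := fun ω =>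
    Sum.elim (fun q : {t : Fin d // 1 ≤ t.val} × Fin n2 × Fin r => ε q.1 ω q.2.1 q.2.2)
      (fun q : Fin d × Fin n1 × Fin n2 => Z q.1 ω q.2.1 q.2.2) with hΦ_def
  set π' : Measure (NoiseGaussIdx d n1 n2 r → ℝ) :=
    Measure.pi (fun m => gaussianReal 0 (Vfun m)) with hπ'_def
  have hGauss' : Measure.map Φ ℙ = π' := hGauss
  have hΦae : AEMeasurable Φ ℙ := by
    by_contra h
    rw [Measure.map_of_not_aemeasurable h] at hGauss'
    have h1 : π' Set.univ = 1 := measure_univ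
    rw [← hGauss'] at h1
    simp at h1
  -- the coefficient matrices
  set AA : Fin n1 → Fin d → Fin n2 → NoiseGaussIdx d n1 n2 r → ℝ := fun i t j =>
    Sum.elim
      (fun q : {t : Fin d // 1 ≤ t.val} × Fin n2 × Fin r =>
        if q.2.1 = j ∧ t.val < q.1.1.val then U i q.2.2 else 0)
      (fun q : Fin d × Fin n1 × Fin n2 => if q = (t, i, j) then 1 else 0) with hAA_def
  set Vt : Fin d → ℝ := fun t => (σ1 : ℝ) ^ 2 +
    (μ0 ^ 2 * (r : ℝ) / (n1 : ℝ)) * ((d : ℝ) - 1 - (t.val : ℝ)) * (σ2 : ℝ) ^ 2 with hVt_def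
  have htd : ∀ t : Fin d, (0:ℝ) ≤ (d : ℝ) - 1 - (t.val : ℝ) := by
    intro t
    have := t.isLt
    have h1 : (t.val : ℝ) + 1 ≤ (d : ℝ) := by exact_mod_cast this
    linarith
  have hVt_nonneg : ∀ t, 0 ≤ Vt t := by
    intro t
    have h2 : (0:ℝ) ≤ μ0 ^ 2 * (r : ℝ) / (n1 : ℝ) := by positivity
    have := htd t
    have : (0:ℝ) ≤ (μ0 ^ 2 * (r : ℝ) / (n1 : ℝ)) * ((d : ℝ) - 1 - (t.val : ℝ)) * (σ2:ℝ) ^ 2 := by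
      apply mul_nonneg (mul_nonneg h2 this) (sq_nonneg _)
    rw [hVt_def]
    have : (0:ℝ) ≤ ((σ1:ℝ))^2 := sq_nonneg _
    positivity
  -- row incoherence bound
  have hUb : ∀ i : Fin n1, ∑ k, (U i k) ^ 2 ≤ μ0 ^ 2 * (r : ℝ) / (n1 : ℝ) := by
    intro i
    have h := hUinc i
    have hnn : (0:ℝ) ≤ ∑ k, (U i k) ^ 2 := Finset.sum_nonneg fun k _ => sq_nonneg _
    have h1 : (∑ k, (U i k) ^ 2) = (Real.sqrt (∑ k, (U i k) ^ 2)) ^ 2 :=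
      (Real.sq_sqrt hnn).symm
    have h2 : (Real.sqrt (∑ k, (U i k) ^ 2)) ^ 2 ≤ (μ0 * Real.sqrt r / Real.sqrt n1) ^ 2 :=
      pow_le_pow_left₀ (Real.sqrt_nonneg _) h 2
    have h3 : (μ0 * Real.sqrt r / Real.sqrt n1) ^ 2 = μ0 ^ 2 * (r : ℝ) / (n1 : ℝ) := by
      rw [div_pow, mul_pow, Real.sq_sqrt (Nat.cast_nonneg r), Real.sq_sqrt (Nat.cast_nonneg n1)]
    rw [h1]
    rw [h3] at h2
    exact h2
  -- cardinality of future time steps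
  have hcard : ∀ t : Fin d,
      (((univ : Finset (Fin d)).filter (fun s => t < s)).card : ℝ) =
        (d : ℝ) - 1 - (t.val : ℝ) := by
    intro t
    rw [Finset.filter_lt_eq_Ioi, Fin.card_Ioi]
    have h1 : t.val + 1 ≤ d := t.isLt
    rw [Nat.sub_sub, Nat.cast_sub (by omega), Nat.cast_add, Nat.cast_one]
    ring
  -- disjointness of rows
  have hdisj : ∀ (i : Fin n1) (t : Fin d) (m : NoiseGaussIdx d n1 n2 r) (j j' : Fin n2),
      AA i t j m ≠ 0 → AA i t j' m ≠ 0 → j = j' := by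
    intro i t m j j' hj hj'
    rcases m with q | q
    · simp only [hAA_def, Sum.elim_inl, ne_eq, ite_eq_right_iff, not_forall] at hj hj'
      obtain ⟨⟨hj1, _⟩, _⟩ := hj
      obtain ⟨⟨hj'1, _⟩, _⟩ := hj'
      rw [← hj1, ← hj'1]
    · simp only [hAA_def, Sum.elim_inr, ne_eq, ite_eq_right_iff, not_forall] at hj hj'
      obtain ⟨hj1, _⟩ := hj
      obtain ⟨hj'1, _⟩ := hj'
      rw [hj1] at hj'1
      simp only [Prod.mk.injEq, true_and] at hj'1
      exact hj'1
  -- row variance bound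
  have hrow : ∀ (i : Fin n1) (t : Fin d) (j : Fin n2),
      ∑ m, (AA i t j m) ^ 2 * ((Vfun m : ℝ)) ≤ Vt t := by
    intro i t j
    rw [Fintype.sum_sum_type]
    have hinr : ∑ q : Fin d × Fin n1 × Fin n2,
        (AA i t j (Sum.inr q)) ^ 2 * ((Vfun (Sum.inr q) : ℝ)) = (σ1:ℝ) ^ 2 := by
      simp only [hAA_def, Sum.elim_inr, hVfun_def, noiseGaussVar]
      have : ∀ q : Fin d × Fin n1 × Fin n2,
          ((if q = (t, i, j) then (1:ℝ) else 0)) ^ 2 * (((σ1 ^ 2 : ℝ≥0) : ℝ)) =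
            if q = (t, i, j) then ((σ1:ℝ)) ^ 2 else 0 := by
        intro q
        by_cases hq : q = (t, i, j) <;> simp [hq]
      simp_rw [this]
      rw [Finset.sum_ite_eq' univ ((t, i, j) : Fin d × Fin n1 × Fin n2)]
      simp
    have hinl : ∑ q : {t : Fin d // 1 ≤ t.val} × Fin n2 × Fin r,
        (AA i t j (Sum.inl q)) ^ 2 * ((Vfun (Sum.inl q) : ℝ)) =
          (((univ : Finset (Fin d)).filter (fun s => t < s)).card : ℝ) *
            ((∑ k, (U i k) ^ 2) * (σ2:ℝ) ^ 2) := by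
      have pull : ∀ {γ : Type} [Fintype γ] (c : Prop) [inst : Decidable c] (f : γ → ℝ),
          (∑ k : γ, if c then f k else 0) = if c then ∑ k, f k else 0 := by
        intro γ _ c _ f
        by_cases h : c <;> simp [h]
      have hsum_sub : ∀ X : ℝ,
          (∑ s : {s : Fin d // 1 ≤ s.val}, if t.val < s.1.val then X else 0) =
            (((univ : Finset (Fin d)).filter (fun s => t < s)).card : ℝ) * X := by
        intro X
        rw [← Finset.sum_subtype (univ.filter (fun s : Fin d => 1 ≤ s.val)) (by simp)
          (fun s : Fin d => if t.val < s.val then X else 0)]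
        rw [← Finset.sum_filter, Finset.filter_filter, Finset.sum_const, nsmul_eq_mul]
        have hfe : (univ : Finset (Fin d)).filter (fun a => 1 ≤ a.val ∧ t.val < a.val) =
            (univ : Finset (Fin d)).filter (fun s => t < s) := by
          ext x
          simp only [Finset.mem_filter, Finset.mem_univ, true_and, Fin.lt_def]
          omega
        rw [hfe]
      simp only [hAA_def, Sum.elim_inl, hVfun_def, noiseGaussVar]
      rw [Fintype.sum_prod_type]
      have h1 : ∀ (s : {s : Fin d // 1 ≤ s.val}) (q : Fin n2 × Fin r),
          ((if q.1 = j ∧ t.val < s.1.val then U i q.2 else 0) ^ 2) *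
              (((σ2 ^ 2 : ℝ≥0)) : ℝ) =
            if q.1 = j then (if t.val < s.1.val then (U i q.2) ^ 2 * (σ2:ℝ) ^ 2 else 0)
              else 0 := by
        intro s q
        by_cases h : q.1 = j <;> by_cases h2 : t.val < s.1.val <;>
          simp [h, h2] <;> push_cast <;> ring
      simp_rw [h1]
      have h2 : ∀ s : {s : Fin d // 1 ≤ s.val},
          (∑ q : Fin n2 × Fin r, if q.1 = j
              then (if t.val < s.1.val then (U i q.2) ^ 2 * (σ2:ℝ) ^ 2 else 0) else 0) =
            if t.val < s.1.val then (∑ k, (U i k) ^ 2) * (σ2:ℝ) ^ 2 else 0 := by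
        intro s
        rw [Fintype.sum_prod_type]
        simp_rw [pull]
        rw [Finset.sum_ite_eq' univ j
          (fun _ => if t.val < s.1.val then ∑ k : Fin r, (U i k) ^ 2 * (σ2:ℝ) ^ 2 else 0)]
        simp only [Finset.mem_univ, if_true]
        rw [← Finset.sum_mul]
      simp_rw [h2]
      rw [hsum_sub]
    rw [hinl, hinr, hcard t]
    have hmul : ((d:ℝ) - 1 - t.val) * ((∑ k, (U i k) ^ 2) * (σ2:ℝ)^2) ≤
        (μ0 ^ 2 * (r : ℝ) / (n1 : ℝ)) * ((d : ℝ) - 1 - (t.val : ℝ)) * (σ2 : ℝ) ^ 2 := by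
      have h1 : ((d:ℝ) - 1 - t.val) * ((∑ k, (U i k) ^ 2) * (σ2:ℝ)^2) ≤
          ((d:ℝ) - 1 - t.val) * ((μ0 ^ 2 * (r : ℝ) / (n1 : ℝ)) * (σ2:ℝ)^2) := by
        apply mul_le_mul_of_nonneg_left _ (htd t)
        apply mul_le_mul_of_nonneg_right (hUb i) (sq_nonneg _)
      calc ((d:ℝ) - 1 - t.val) * ((∑ k, (U i k) ^ 2) * (σ2:ℝ)^2)
          ≤ ((d:ℝ) - 1 - t.val) * ((μ0 ^ 2 * (r : ℝ) / (n1 : ℝ)) * (σ2:ℝ)^2) := h1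
        _ = (μ0 ^ 2 * (r : ℝ) / (n1 : ℝ)) * ((d : ℝ) - 1 - (t.val : ℝ)) * (σ2 : ℝ) ^ 2 := by
            ring
    rw [hVt_def]
    linarith
  -- entrywise formula for F
  have hFA : ∀ (t : Fin d) (ω : Ω) (i : Fin n1) (j : Fin n2),
      F t ω i j = ∑ m, AA i t j m * Φ ω m := by
    intro t ω i j
    have pull : ∀ {γ : Type} [inst : Fintype γ] (c : Prop) [inst2 : Decidable c] (f : γ → ℝ),
        (∑ k : γ, if c then f k else 0) = if c then ∑ k, f k else 0 := by
      intro γ _ c _ f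
      by_cases h : c <;> simp [h]
    rw [hF t ω]
    simp only [Matrix.add_apply, Matrix.mul_apply, Matrix.transpose_apply]
    rw [Fintype.sum_sum_type]
    have hinr : ∑ q : Fin d × Fin n1 × Fin n2,
        AA i t j (Sum.inr q) * Φ ω (Sum.inr q) = Z t ω i j := by
      simp only [hAA_def, Sum.elim_inr, hΦ_def]
      have : ∀ q : Fin d × Fin n1 × Fin n2,
          (if q = (t, i, j) then (1:ℝ) else 0) * Z q.1 ω q.2.1 q.2.2 =
            if q = (t, i, j) then Z q.1 ω q.2.1 q.2.2 else 0 := by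
        intro q
        by_cases hq : q = (t, i, j) <;> simp [hq]
      simp_rw [this]
      rw [Finset.sum_ite_eq' univ ((t, i, j) : Fin d × Fin n1 × Fin n2)
        (fun q => Z q.1 ω q.2.1 q.2.2)]
      simp
    have hinl : ∑ q : {s : Fin d // 1 ≤ s.val} × Fin n2 × Fin r,
        AA i t j (Sum.inl q) * Φ ω (Sum.inl q) =
          ∑ k, U i k * (∑ s : {s : Fin d // 1 ≤ s.val},
            if t.val < s.1.val then ε s ω else 0) j k := by
      simp only [hAA_def, Sum.elim_inl, hΦ_def]
      rw [Fintype.sum_prod_type]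
      have h1 : ∀ (s : {s : Fin d // 1 ≤ s.val}) (q : Fin n2 × Fin r),
          (if q.1 = j ∧ t.val < s.1.val then U i q.2 else 0) * ε s ω q.1 q.2 =
            if q.1 = j then (if t.val < s.1.val then U i q.2 * ε s ω j q.2 else 0) else 0 := by
        intro s q
        by_cases h : q.1 = j <;> by_cases h2 : t.val < s.1.val <;> simp [h, h2]
      simp_rw [h1]
      have h2 : ∀ s : {s : Fin d // 1 ≤ s.val},
          (∑ q : Fin n2 × Fin r, if q.1 = j
              then (if t.val < s.1.val then U i q.2 * ε s ω j q.2 else 0) else 0) =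
            if t.val < s.1.val then ∑ k, U i k * ε s ω j k else 0 := by
        intro s
        rw [Fintype.sum_prod_type]
        simp_rw [pull]
        rw [Finset.sum_ite_eq' univ j
          (fun _ => if t.val < s.1.val then ∑ k : Fin r, U i k * ε s ω j k else 0)]
        simp
      simp_rw [h2]
      have h3 : ∀ k : Fin r, (∑ s : {s : Fin d // 1 ≤ s.val},
          if t.val < s.1.val then ε s ω else 0) j k =
            ∑ s : {s : Fin d // 1 ≤ s.val}, (if t.val < s.1.val then ε s ω j k else 0) := by
        intro k
        rw [Matrix.sum_apply]
        refine Finset.sum_congr rfl fun s _ => ?_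
        by_cases h : t.val < s.1.val
        · rw [if_pos h, if_pos h]
        · rw [if_neg h, if_neg h]; rfl
      have h3 : ∀ k : Fin r,
          U i k * (∑ s : {s : Fin d // 1 ≤ s.val}, if t.val < s.1.val then ε s ω else 0) j k =
            ∑ s : {s : Fin d // 1 ≤ s.val}, (if t.val < s.1.val then U i k * ε s ω j k else 0) := by
        intro k
        rw [Matrix.sum_apply, Finset.mul_sum]
        refine Finset.sum_congr rfl fun s _ => ?_
        by_cases h : t.val < s.1.val
        · rw [if_pos h, if_pos h]
        · rw [if_neg h, if_neg h]
          simp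
      rw [Finset.sum_congr rfl (fun k (_ : k ∈ univ) => h3 k), Finset.sum_comm]
      exact Finset.sum_congr rfl fun s _ => (pull _ _).symm
    rw [hinl, hinr]
  -- rephrase the goal with Vt
  show 1 - 2 * d * (n1 : ℝ) * Real.exp (-(n2 : ℝ)) ≤
      (ℙ {ω | ∀ i : Fin n1,
        (∑ t, (w t) ^ 2 * ∑ j, (F t ω i j) ^ 2) ≤
          10 * (n2 : ℝ) * ∑ t : Fin d, (w t) ^ 2 * Vt t}).toReal
  set T : Set Ω := {ω | ∀ i : Fin n1,
      (∑ t, (w t) ^ 2 * ∑ j, (F t ω i j) ^ 2) ≤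
        10 * (n2 : ℝ) * ∑ t : Fin d, (w t) ^ 2 * Vt t} with hT_def
  set Bad : Fin n1 × Fin d → Set (NoiseGaussIdx d n1 n2 r → ℝ) := fun p =>
    {g | 10 * (n2:ℝ) * Vt p.2 < ∑ j, (∑ m, AA p.1 p.2 j m * g m) ^ 2} with hBad_def
  have hBadMeas : ∀ p, MeasurableSet (Bad p) := by
    intro p
    apply measurableSet_lt measurable_const
    exact Finset.measurable_sum _ fun j _ =>
      (Finset.measurable_sum _ fun m _ => (measurable_pi_apply m).const_mul _).pow_const 2
  have hBadBound : ∀ p, π' (Bad p) ≤ ENNReal.ofReal (2 * Real.exp (-(n2:ℝ))) := by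
    intro p
    exact master_gauss_bound Vfun (AA p.1 p.2) (fun m j j' => hdisj p.1 p.2 m j j')
      (Vt p.2) (hVt_nonneg p.2) (hrow p.1 p.2)
  have hsubset : Tᶜ ⊆ ⋃ p : Fin n1 × Fin d, Φ ⁻¹' Bad p := by
    intro ω hω
    simp only [hT_def, Set.mem_compl_iff, Set.mem_setOf_eq, not_forall, not_le] at hω
    obtain ⟨i, hi⟩ := hω
    by_contra hnot
    simp only [Set.mem_iUnion, not_exists, Set.mem_preimage] at hnot
    have hbound : ∀ t : Fin d, ∑ j, (F t ω i j) ^ 2 ≤ 10 * (n2:ℝ) * Vt t := by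
      intro t
      have h1 := hnot (i, t)
      simp only [hBad_def, Set.mem_setOf_eq, not_lt] at h1
      calc ∑ j, (F t ω i j) ^ 2 = ∑ j, (∑ m, AA i t j m * Φ ω m) ^ 2 := by
            exact Finset.sum_congr rfl fun j _ => by rw [hFA]
        _ ≤ 10 * (n2:ℝ) * Vt t := h1
    have hfin : ∑ t, w t ^ 2 * ∑ j, (F t ω i j) ^ 2 ≤
        10 * (n2:ℝ) * ∑ t, w t ^ 2 * Vt t := by
      rw [Finset.mul_sum]
      refine Finset.sum_le_sum fun t _ => ?_
      calc w t ^ 2 * ∑ j, (F t ω i j) ^ 2 ≤ w t ^ 2 * (10 * (n2:ℝ) * Vt t) :=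
            mul_le_mul_of_nonneg_left (hbound t) (sq_nonneg _)
        _ = 10 * (n2:ℝ) * (w t ^ 2 * Vt t) := by ring
    exact absurd hi (not_lt.2 hfin)
  have hcompl : ℙ Tᶜ ≤ ENNReal.ofReal (2 * d * (n1:ℝ) * Real.exp (-(n2:ℝ))) := by
    calc ℙ Tᶜ ≤ ℙ (⋃ p : Fin n1 × Fin d, Φ ⁻¹' Bad p) := measure_mono hsubset
      _ ≤ ∑' p : Fin n1 × Fin d, ℙ (Φ ⁻¹' Bad p) := measure_iUnion_le _
      _ = ∑ p : Fin n1 × Fin d, ℙ (Φ ⁻¹' Bad p) := tsum_fintype _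
      _ ≤ ∑ _p : Fin n1 × Fin d, ENNReal.ofReal (2 * Real.exp (-(n2:ℝ))) := by
          refine Finset.sum_le_sum fun p _ => ?_
          rw [← Measure.map_apply_of_aemeasurable hΦae (hBadMeas p), hGauss']
          exact hBadBound p
      _ = ((n1 * d : ℕ) : ℝ≥0∞) * ENNReal.ofReal (2 * Real.exp (-(n2:ℝ))) := by
          rw [Finset.sum_const, Finset.card_univ]
          simp [Fintype.card_prod, nsmul_eq_mul]
      _ = ENNReal.ofReal (2 * d * (n1:ℝ) * Real.exp (-(n2:ℝ))) := by
          rw [← ENNReal.ofReal_natCast, ← ENNReal.ofReal_mul (by positivity)]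
          congr 1
          push_cast
          ring
  have hT1 : (1:ℝ≥0∞) ≤ ℙ T + ℙ Tᶜ := by
    calc (1:ℝ≥0∞) = ℙ (T ∪ Tᶜ) := by rw [Set.union_compl_self]; exact measure_univ.symm
      _ ≤ ℙ T + ℙ Tᶜ := measure_union_le _ _
  have h2 : (1:ℝ) ≤ (ℙ T).toReal + 2 * d * (n1:ℝ) * Real.exp (-(n2:ℝ)) := by
    have hle : (1:ℝ≥0∞) ≤ ℙ T + ENNReal.ofReal (2 * d * (n1:ℝ) * Real.exp (-(n2:ℝ))) :=
      le_trans hT1 (add_le_add_right hcompl _)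
    have hfin : ℙ T + ENNReal.ofReal (2 * d * (n1:ℝ) * Real.exp (-(n2:ℝ))) ≠ ⊤ :=
      ENNReal.add_ne_top.2 ⟨measure_ne_top _ _, ENNReal.ofReal_ne_top⟩
    have h3 := ENNReal.toReal_mono hfin hle
    rw [ENNReal.toReal_one, ENNReal.toReal_add (measure_ne_top _ _) ENNReal.ofReal_ne_top,
      ENNReal.toReal_ofReal (by positivity)] at h3
    exact h3
  linarith
end
end

section
/- Let U ∈ ℝ^{n1×r} have orthonormal columns. For t = 2,…,d let ε^t ∈ ℝ^{n2×r} have i.i.d. N(0,σ2²) entries, for t = 1,…,d let Z^t ∈ ℝ^{n1×n2} have i.i.d. N(0,σ1²) entries, with all these Gaussian matrices mutually independent, and set F^t = U·(Σ_{s=t+1}^d ε^s)^T + Z^t. Let w_1,…,w_d ≥ 0. Then with probability at least 1 − 2·d·n2·exp(−n1): max_{1≤j≤n2} Σ_{t=1}^d w_t² Σ_{i=1}^{n1} (F^t_{ij})² ≤ 10·n1·Σ_{t=1}^d w_t²·( σ1² + (d−t)·σ2² ). -/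
open MeasureTheory ProbabilityTheory Matrix Finset
open scoped NNReal ENNReal

noncomputable section

namespace NoiseAux



lemma lintegral_exp_mul_gaussian (v : ℝ≥0) (θ : ℝ) :
    ∫⁻ x, ENNReal.ofReal (Real.exp (θ * x)) ∂(gaussianReal 0 v)
      = ENNReal.ofReal (Real.exp (θ ^ 2 * v / 2)) := by
  by_cases hv : v = 0
  · subst hv
    rw [gaussianReal_zero_var, lintegral_dirac]
    norm_num
  · have hv' : (0:ℝ) < (v:ℝ) := by positivity
    rw [gaussianReal_of_var_ne_zero _ hv,
      lintegral_withDensity_eq_lintegral_mul _ (measurable_gaussianPDF _ _)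
        (by fun_prop : Measurable fun x : ℝ => ENNReal.ofReal (Real.exp (θ * x)))]
    have hpt : ∀ x : ℝ, (gaussianPDF 0 v * fun x => ENNReal.ofReal (Real.exp (θ * x))) x
        = ENNReal.ofReal (Real.exp (θ ^ 2 * v / 2))
          * ENNReal.ofReal (gaussianPDFReal (θ * v) v x) := by
      intro x
      simp only [Pi.mul_apply, gaussianPDF]
      rw [← ENNReal.ofReal_mul (gaussianPDFReal_nonneg _ _ _),
        ← ENNReal.ofReal_mul (Real.exp_nonneg _)]
      congr 1
      have hmerge : ∀ (c a b : ℝ), c * Real.exp a * Real.exp b = c * Real.exp (a + b) := by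
        intro c a b; rw [mul_assoc, ← Real.exp_add]
      simp only [gaussianPDFReal, sub_zero]
      rw [hmerge, mul_comm (Real.exp (θ ^ 2 * (v:ℝ) / 2)), hmerge]
      congr 1
      rw [Real.exp_eq_exp]
      field_simp
      ring
    simp_rw [hpt]
    rw [lintegral_const_mul _ ((measurable_gaussianPDFReal _ _).ennreal_ofReal),
      lintegral_gaussianPDFReal_eq_one (θ * v) hv, mul_one]

lemma lintegral_exp_sq_gaussian (v : ℝ≥0) (θ : ℝ) (h : 2 * θ * v < 1) :
    ∫⁻ x, ENNReal.ofReal (Real.exp (θ * x ^ 2)) ∂(gaussianReal 0 v)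
      = ENNReal.ofReal ((Real.sqrt (1 - 2 * θ * v))⁻¹) := by
  by_cases hv : v = 0
  · subst hv
    rw [gaussianReal_zero_var, lintegral_dirac]
    norm_num
  · have hv' : (0:ℝ) < (v:ℝ) := by positivity
    have hc : (0:ℝ) < 1 - 2 * θ * v := by linarith
    set v' : ℝ≥0 := ⟨(v:ℝ) / (1 - 2 * θ * v), by positivity⟩ with hv'def
    have hv'0 : v' ≠ 0 := by
      rw [← NNReal.coe_ne_zero]
      show ((v:ℝ) / (1 - 2 * θ * v)) ≠ 0
      positivity
    rw [gaussianReal_of_var_ne_zero _ hv,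
      lintegral_withDensity_eq_lintegral_mul _ (measurable_gaussianPDF _ _)
        (by fun_prop : Measurable fun x : ℝ => ENNReal.ofReal (Real.exp (θ * x ^ 2)))]
    have hpt : ∀ x : ℝ, (gaussianPDF 0 v * fun x => ENNReal.ofReal (Real.exp (θ * x ^ 2))) x
        = ENNReal.ofReal ((Real.sqrt (1 - 2 * θ * v))⁻¹)
          * ENNReal.ofReal (gaussianPDFReal 0 v' x) := by
      intro x
      simp only [Pi.mul_apply, gaussianPDF]
      rw [← ENNReal.ofReal_mul (gaussianPDFReal_nonneg _ _ _),
        ← ENNReal.ofReal_mul (by positivity)]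
      congr 1
      have hmerge : ∀ (c a b : ℝ), c * Real.exp a * Real.exp b = c * Real.exp (a + b) := by
        intro c a b; rw [mul_assoc, ← Real.exp_add]
      simp only [gaussianPDFReal, sub_zero]
      have hcoe : (v' : ℝ) = (v:ℝ) / (1 - 2 * θ * v) := rfl
      rw [hcoe, hmerge]
      have hsqrt : (Real.sqrt (2 * Real.pi * v))⁻¹
          = (Real.sqrt (1 - 2 * θ * v))⁻¹ * (Real.sqrt (2 * Real.pi * ((v:ℝ) / (1 - 2 * θ * v))))⁻¹ := by
        rw [← mul_inv, ← Real.sqrt_mul hc.le]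
        congr 2
        field_simp
        rw [div_self (by intro h0; linarith)]
      rw [hsqrt, mul_assoc ((Real.sqrt (1 - 2 * θ * (v:ℝ)))⁻¹)]
      congr 2
      rw [Real.exp_eq_exp]
      field_simp
      ring
    simp_rw [hpt]
    rw [lintegral_const_mul _ ((measurable_gaussianPDFReal _ _).ennreal_ofReal),
      lintegral_gaussianPDFReal_eq_one 0 hv'0, mul_one]

lemma lintegral_fin_pi_prod : ∀ {n : ℕ} (μ : Fin n → Measure ℝ),
    (∀ i, IsProbabilityMeasure (μ i)) →
    ∀ (f : Fin n → ℝ → ℝ≥0∞), (∀ i, Measurable (f i)) →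
    ∫⁻ x : Fin n → ℝ, ∏ i, f i (x i) ∂Measure.pi μ = ∏ i, ∫⁻ y, f i y ∂μ i := by
  intro n
  induction n with
  | zero =>
    intro μ hμ f hf
    haveI := hμ
    have h0 : (fun x : Fin 0 → ℝ => ∏ i, f i (x i)) = fun _ => 1 := by
      funext x; simp
    rw [h0, lintegral_const, Measure.pi_empty_univ]
    simp
  | succ n ih =>
    intro μ hμ f hf
    haveI := hμ
    have hmp := MeasureTheory.measurePreserving_piFinSuccAbove μ 0
    set e := MeasurableEquiv.piFinSuccAbove (fun _ : Fin (n+1) => ℝ) 0 with he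
    have h1 : ∫⁻ x : Fin (n+1) → ℝ, ∏ i, f i (x i) ∂Measure.pi μ
        = ∫⁻ p : ℝ × (Fin n → ℝ), ∏ i, f i (e.symm p i)
            ∂((μ 0).prod (Measure.pi fun j : Fin n => μ ((0 : Fin (n+1)).succAbove j))) := by
      rw [← hmp.map_eq, lintegral_map_equiv (fun p => ∏ i, f i (e.symm p i)) e]
      refine lintegral_congr fun x => ?_
      simp
    rw [h1]
    have h2 : ∀ p : ℝ × (Fin n → ℝ), (∏ i, f i (e.symm p i))
        = f 0 p.1 * ∏ j : Fin n, f (Fin.succ j) (p.2 j) := by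
      intro p
      simp only [he, MeasurableEquiv.piFinSuccAbove_symm_apply, Fin.insertNthEquiv,
        Equiv.coe_fn_mk, Fin.insertNth_zero]
      rw [Fin.prod_univ_succ]
      simp
    simp_rw [h2]
    rw [lintegral_prod_mul (f := f 0) (g := fun w : Fin n → ℝ => ∏ j : Fin n, f (Fin.succ j) (w j))
      (hf 0).aemeasurable
      (Measurable.aemeasurable (Finset.measurable_prod univ
        (fun j _ => (hf (Fin.succ j)).comp (measurable_pi_apply j))))]
    simp only [Fin.zero_succAbove]
    rw [ih (fun j => μ (Fin.succ j)) (fun j => hμ _) (fun j => f (Fin.succ j)) (fun j => hf _)]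
    rw [Fin.prod_univ_succ (fun i => ∫⁻ y, f i y ∂μ i)]

lemma lintegral_pi_prod {ι : Type*} [Fintype ι] (μ : ι → Measure ℝ)
    (hμ : ∀ i, IsProbabilityMeasure (μ i))
    (f : ι → ℝ → ℝ≥0∞) (hf : ∀ i, Measurable (f i)) :
    ∫⁻ x : ι → ℝ, ∏ i, f i (x i) ∂Measure.pi μ = ∏ i, ∫⁻ y, f i y ∂μ i := by
  haveI := hμ
  set e := (Fintype.equivFin ι).symm with he
  have hmp := MeasureTheory.measurePreserving_piCongrLeft μ e
  rw [← hmp.map_eq, lintegral_map_equiv]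
  have hpt : ∀ x : Fin (Fintype.card ι) → ℝ,
      (∏ i, f i ((MeasurableEquiv.piCongrLeft (fun _ => ℝ) e) x i))
        = ∏ i', f (e i') (x i') := by
    intro x
    rw [← e.prod_comp (fun i => f i ((MeasurableEquiv.piCongrLeft (fun _ => ℝ) e) x i))]
    refine Finset.prod_congr rfl fun i' _ => ?_
    congr 1
    rw [MeasurableEquiv.coe_piCongrLeft]
    exact Equiv.piCongrLeft_apply_apply (fun _ => ℝ) e x i'
  simp_rw [hpt]
  rw [lintegral_fin_pi_prod _ (fun i' => hμ _) _ (fun i' => hf _)]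
  exact e.prod_comp (fun i => ∫⁻ y, f i y ∂μ i)

lemma gauss_tail {ι : Type*} [Fintype ι] (V : ι → ℝ≥0) (v : ℝ≥0) (hv : v ≠ 0)
    (m k N : ℕ) (hk : 0 < k) (hm : m ≤ N)
    (e : Fin m × Fin k → ι) (he : Function.Injective e) (hVe : ∀ p, V (e p) = v) :
    Measure.pi (fun i => gaussianReal 0 (V i))
      {x | 5 * (N:ℝ) * ((k:ℝ) * (v:ℝ)) < ∑ l : Fin m, (∑ s : Fin k, x (e (l, s)))^2}
      ≤ ENNReal.ofReal (Real.exp (-(N:ℝ))) := by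
  classical
  have hv0 : (0:ℝ) < (v:ℝ) := NNReal.coe_pos.mpr (zero_lt_iff.mpr hv)
  have hk0 : (0:ℝ) < (k:ℝ) := by exact_mod_cast hk
  have hkv : (0:ℝ) < (k:ℝ) * (v:ℝ) := mul_pos hk0 hv0
  set lam : ℝ := 2 / (5 * ((k:ℝ) * (v:ℝ))) with hlam
  have hlam0 : 0 < lam := by positivity
  have hlamkv : lam * ((k:ℝ) * (v:ℝ)) = 2/5 := by
    rw [hlam]; field_simp
  set c : ℝ := Real.sqrt (2 * lam) with hc
  have hc2 : c ^ 2 = 2 * lam := Real.sq_sqrt (by positivity)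
  have hAmeas : ∀ l : Fin m, Measurable (fun x : ι → ℝ => ∑ s : Fin k, x (e (l, s))) :=
    fun l => Finset.measurable_sum _ fun s _ => measurable_pi_apply _
  have hSmeas : Measurable fun x : ι → ℝ => ∑ l : Fin m, (∑ s : Fin k, x (e (l, s)))^2 :=
    Finset.measurable_sum _ fun l _ => (hAmeas l).pow_const 2
  -- Step L : pointwise linearization
  have hL : ∀ x : ι → ℝ,
      ENNReal.ofReal (Real.exp (lam * ∑ l : Fin m, (∑ s : Fin k, x (e (l, s)))^2))
      = ∫⁻ g : Fin m → ℝ, ENNReal.ofReal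
          (Real.exp (∑ l : Fin m, c * (∑ s : Fin k, x (e (l, s))) * g l))
          ∂Measure.pi (fun _ : Fin m => gaussianReal 0 1) := by
    intro x
    have h1 : ∀ g : Fin m → ℝ,
        ENNReal.ofReal (Real.exp (∑ l : Fin m, c * (∑ s : Fin k, x (e (l, s))) * g l))
        = ∏ l : Fin m, ENNReal.ofReal (Real.exp ((c * (∑ s : Fin k, x (e (l, s)))) * g l)) := by
      intro g
      rw [Real.exp_sum, ENNReal.ofReal_prod_of_nonneg (fun _ _ => Real.exp_nonneg _)]
    simp_rw [h1]
    rw [lintegral_pi_prod (fun _ : Fin m => gaussianReal 0 1) (fun _ => inferInstance)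
      (fun l y => ENNReal.ofReal (Real.exp ((c * (∑ s : Fin k, x (e (l, s)))) * y)))
      (fun l => (ENNReal.measurable_ofReal.comp (Real.measurable_exp.comp
        (measurable_id.const_mul _))))]
    have h2 : ∀ l : Fin m, ∫⁻ y, ENNReal.ofReal
          (Real.exp ((c * (∑ s : Fin k, x (e (l, s)))) * y)) ∂gaussianReal 0 1
        = ENNReal.ofReal (Real.exp ((c * (∑ s : Fin k, x (e (l, s)))) ^ 2 * ((1:ℝ≥0):ℝ) / 2)) :=
      fun l => lintegral_exp_mul_gaussian 1 _
    simp_rw [h2]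
    rw [← ENNReal.ofReal_prod_of_nonneg (fun _ _ => Real.exp_nonneg _), ← Real.exp_sum]
    congr 1
    rw [Real.exp_eq_exp, Finset.mul_sum]
    refine Finset.sum_congr rfl fun l _ => ?_
    rw [mul_pow, hc2, NNReal.coe_one]
    ring
  -- the mgf computation
  have hmgf : ∫⁻ x, ENNReal.ofReal
        (Real.exp (lam * ∑ l : Fin m, (∑ s : Fin k, x (e (l, s)))^2))
        ∂Measure.pi (fun i => gaussianReal 0 (V i))
      = ENNReal.ofReal (Real.sqrt 5 ^ m) := by
    calc ∫⁻ x, ENNReal.ofReal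
          (Real.exp (lam * ∑ l : Fin m, (∑ s : Fin k, x (e (l, s)))^2))
          ∂Measure.pi (fun i => gaussianReal 0 (V i))
        = ∫⁻ x, ∫⁻ g : Fin m → ℝ, ENNReal.ofReal
            (Real.exp (∑ l : Fin m, c * (∑ s : Fin k, x (e (l, s))) * g l))
            ∂Measure.pi (fun _ : Fin m => gaussianReal 0 1)
            ∂Measure.pi (fun i => gaussianReal 0 (V i)) := lintegral_congr hL
      _ = ∫⁻ g : Fin m → ℝ, ∫⁻ x, ENNReal.ofReal
            (Real.exp (∑ l : Fin m, c * (∑ s : Fin k, x (e (l, s))) * g l))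
            ∂Measure.pi (fun i => gaussianReal 0 (V i))
            ∂Measure.pi (fun _ : Fin m => gaussianReal 0 1) := by
          refine lintegral_lintegral_swap (Measurable.aemeasurable ?_)
          apply ENNReal.measurable_ofReal.comp
          apply Real.measurable_exp.comp
          apply Finset.measurable_sum
          intro l _
          exact (((hAmeas l).comp measurable_fst).const_mul c).mul
            ((measurable_pi_apply l).comp measurable_snd)
      _ = ∫⁻ g : Fin m → ℝ, ENNReal.ofReal
            (Real.exp (lam * ((k:ℝ) * (v:ℝ)) * ∑ l : Fin m, (g l)^2))
            ∂Measure.pi (fun _ : Fin m => gaussianReal 0 1) := by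
          refine lintegral_congr fun g => ?_
          set θ : ι → ℝ := fun i => ∑ p : Fin m × Fin k, if e p = i then c * g p.1 else 0 with hθ
          have hsum : ∀ x : ι → ℝ,
              (∑ l : Fin m, c * (∑ s : Fin k, x (e (l, s))) * g l) = ∑ i : ι, θ i * x i := by
            intro x
            have h1 : (∑ l : Fin m, c * (∑ s : Fin k, x (e (l, s))) * g l)
                = ∑ p : Fin m × Fin k, (c * g p.1) * x (e p) := by
              rw [Fintype.sum_prod_type]
              refine Finset.sum_congr rfl fun l _ => ?_
              rw [Finset.mul_sum, Finset.sum_mul]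
              exact Finset.sum_congr rfl fun s _ => by ring
            have h2 : ∀ p : Fin m × Fin k,
                (∑ i : ι, if e p = i then (c * g p.1) * x i else 0) = (c * g p.1) * x (e p) := by
              intro p
              rw [Finset.sum_ite_eq]
              simp
            calc (∑ l : Fin m, c * (∑ s : Fin k, x (e (l, s))) * g l)
                = ∑ p : Fin m × Fin k, (c * g p.1) * x (e p) := h1
              _ = ∑ p : Fin m × Fin k, ∑ i : ι, (if e p = i then (c * g p.1) * x i else 0) :=
                  Finset.sum_congr rfl fun p _ => (h2 p).symm
              _ = ∑ i : ι, ∑ p : Fin m × Fin k, (if e p = i then (c * g p.1) * x i else 0) :=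
                  Finset.sum_comm
              _ = ∑ i : ι, θ i * x i := by
                  refine Finset.sum_congr rfl fun i _ => ?_
                  show (∑ p : Fin m × Fin k, if e p = i then (c * g p.1) * x i else 0)
                      = (∑ p : Fin m × Fin k, if e p = i then c * g p.1 else 0) * x i
                  rw [Finset.sum_mul]
                  exact Finset.sum_congr rfl fun p _ => by rw [ite_mul, zero_mul]
          simp_rw [hsum]
          have hprod : ∀ x : ι → ℝ, ENNReal.ofReal (Real.exp (∑ i : ι, θ i * x i))
              = ∏ i : ι, ENNReal.ofReal (Real.exp (θ i * x i)) := fun x => by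
            rw [Real.exp_sum, ENNReal.ofReal_prod_of_nonneg (fun _ _ => Real.exp_nonneg _)]
          simp_rw [hprod]
          rw [lintegral_pi_prod (fun i => gaussianReal 0 (V i)) (fun _ => inferInstance)
            (fun i y => ENNReal.ofReal (Real.exp (θ i * y)))
            (fun i => (ENNReal.measurable_ofReal.comp (Real.measurable_exp.comp
              (measurable_id.const_mul _))))]
          have h3 : ∀ i : ι, ∫⁻ y, ENNReal.ofReal (Real.exp (θ i * y)) ∂gaussianReal 0 (V i)
              = ENNReal.ofReal (Real.exp (θ i ^ 2 * ((V i : ℝ)) / 2)) :=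
            fun i => lintegral_exp_mul_gaussian (V i) (θ i)
          simp_rw [h3]
          rw [← ENNReal.ofReal_prod_of_nonneg (fun _ _ => Real.exp_nonneg _), ← Real.exp_sum]
          congr 1
          have hθe : ∀ p : Fin m × Fin k, θ (e p) = c * g p.1 := by
            intro p
            show (∑ q : Fin m × Fin k, if e q = e p then c * g q.1 else 0) = c * g p.1
            rw [Finset.sum_eq_single p (fun q _ hq => if_neg (fun hx => hq (he hx)))
              (fun hp => absurd (mem_univ p) hp)]
            exact if_pos rfl
          have hθ0 : ∀ i, i ∉ Finset.image e univ → θ i = 0 := by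
            intro i hi
            show (∑ p : Fin m × Fin k, if e p = i then c * g p.1 else 0) = 0
            refine Finset.sum_eq_zero fun p _ => if_neg fun hx => hi ?_
            exact Finset.mem_image.mpr ⟨p, mem_univ p, hx⟩
          have hsplit : (∑ i : ι, θ i ^ 2 * ((V i : ℝ)) / 2)
              = ∑ p : Fin m × Fin k, (c * g p.1) ^ 2 * (v:ℝ) / 2 := by
            rw [← Finset.sum_subset (Finset.subset_univ (Finset.image e univ))
              (fun i _ hi => by rw [hθ0 i hi]; simp)]
            rw [Finset.sum_image (fun p _ q _ h => he h)]
            refine Finset.sum_congr rfl fun p _ => ?_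
            rw [hθe p, hVe p]
          rw [Real.exp_eq_exp, hsplit, Fintype.sum_prod_type, Finset.mul_sum]
          refine Finset.sum_congr rfl fun l _ => ?_
          have hcon : ∀ y : Fin k, (c * g (l, y).1) ^ 2 * (v:ℝ) / 2
              = (c * g l) ^ 2 * (v:ℝ) / 2 := fun y => rfl
          rw [Finset.sum_congr rfl fun y _ => hcon y, Finset.sum_const, card_univ,
            Fintype.card_fin, nsmul_eq_mul, mul_pow, hc2]
          ring
      _ = ENNReal.ofReal (Real.sqrt 5 ^ m) := by
          have hpt : ∀ g : Fin m → ℝ,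
              ENNReal.ofReal (Real.exp (lam * ((k:ℝ) * (v:ℝ)) * ∑ l : Fin m, (g l)^2))
              = ∏ l : Fin m, ENNReal.ofReal (Real.exp ((2/5 : ℝ) * (g l)^2)) := by
            intro g
            rw [hlamkv, Finset.mul_sum, Real.exp_sum,
              ENNReal.ofReal_prod_of_nonneg (fun _ _ => Real.exp_nonneg _)]
          simp_rw [hpt]
          rw [lintegral_pi_prod (fun _ : Fin m => gaussianReal 0 1) (fun _ => inferInstance)
            (fun l y => ENNReal.ofReal (Real.exp ((2/5 : ℝ) * y ^ 2)))
            (fun l => (ENNReal.measurable_ofReal.comp (Real.measurable_exp.comp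
              ((measurable_id.pow_const 2).const_mul _))))]
          have h1 : ∫⁻ y, ENNReal.ofReal (Real.exp ((2/5 : ℝ) * y ^ 2)) ∂gaussianReal 0 1
              = ENNReal.ofReal ((Real.sqrt (1 - 2 * (2/5 : ℝ) * ((1:ℝ≥0):ℝ)))⁻¹) :=
            lintegral_exp_sq_gaussian 1 (2/5) (by norm_num)
          simp_rw [h1]
          rw [Finset.prod_const, card_univ, Fintype.card_fin]
          have h2 : (Real.sqrt (1 - 2 * (2/5 : ℝ) * ((1:ℝ≥0):ℝ)))⁻¹ = Real.sqrt 5 := by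
            rw [NNReal.coe_one, mul_one,
              show (1 - 2 * (2/5 : ℝ)) = (5:ℝ)⁻¹ by norm_num, Real.sqrt_inv, inv_inv]
          rw [h2, ← ENNReal.ofReal_pow (Real.sqrt_nonneg 5)]
  -- Markov / Chernoff
  have hsub : {x : ι → ℝ | 5 * (N:ℝ) * ((k:ℝ) * (v:ℝ)) < ∑ l : Fin m, (∑ s : Fin k, x (e (l, s)))^2}
      ⊆ {x : ι → ℝ | ENNReal.ofReal (Real.exp (2 * (N:ℝ)))
          ≤ ENNReal.ofReal (Real.exp (lam * ∑ l : Fin m, (∑ s : Fin k, x (e (l, s)))^2))} := by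
    intro x hx
    simp only [Set.mem_setOf_eq] at hx ⊢
    refine ENNReal.ofReal_le_ofReal (Real.exp_le_exp.mpr ?_)
    have h2N : 2 * (N:ℝ) = lam * (5 * (N:ℝ) * ((k:ℝ) * (v:ℝ))) := by
      rw [hlam]; field_simp
    rw [h2N]
    exact mul_le_mul_of_nonneg_left hx.le hlam0.le
  have hmark := mul_meas_ge_le_lintegral₀
      (μ := Measure.pi fun i => gaussianReal 0 (V i))
      (f := fun x : ι → ℝ => ENNReal.ofReal
        (Real.exp (lam * ∑ l : Fin m, (∑ s : Fin k, x (e (l, s)))^2)))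
      ((ENNReal.measurable_ofReal.comp (Real.measurable_exp.comp
        (hSmeas.const_mul lam))).aemeasurable)
      (ENNReal.ofReal (Real.exp (2 * (N:ℝ))))
  have hμE : Measure.pi (fun i => gaussianReal 0 (V i))
      {x | 5 * (N:ℝ) * ((k:ℝ) * (v:ℝ)) < ∑ l : Fin m, (∑ s : Fin k, x (e (l, s)))^2}
      ≤ ENNReal.ofReal (Real.sqrt 5 ^ m) / ENNReal.ofReal (Real.exp (2 * (N:ℝ))) := by
    rw [ENNReal.le_div_iff_mul_le
      (Or.inl (ENNReal.ofReal_pos.mpr (Real.exp_pos _)).ne')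
      (Or.inl ENNReal.ofReal_ne_top)]
    calc Measure.pi (fun i => gaussianReal 0 (V i))
          {x | 5 * (N:ℝ) * ((k:ℝ) * (v:ℝ)) < ∑ l : Fin m, (∑ s : Fin k, x (e (l, s)))^2}
          * ENNReal.ofReal (Real.exp (2 * (N:ℝ)))
        ≤ ENNReal.ofReal (Real.exp (2 * (N:ℝ)))
          * Measure.pi (fun i => gaussianReal 0 (V i))
            {x | ENNReal.ofReal (Real.exp (2 * (N:ℝ)))
              ≤ ENNReal.ofReal (Real.exp (lam * ∑ l : Fin m, (∑ s : Fin k, x (e (l, s)))^2))} := by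
          rw [mul_comm]
          exact mul_le_mul_right (measure_mono hsub) _
      _ ≤ ∫⁻ x, ENNReal.ofReal
            (Real.exp (lam * ∑ l : Fin m, (∑ s : Fin k, x (e (l, s)))^2))
            ∂Measure.pi (fun i => gaussianReal 0 (V i)) := hmark
      _ = ENNReal.ofReal (Real.sqrt 5 ^ m) := hmgf
  refine le_trans hμE ?_
  rw [← ENNReal.ofReal_div_of_pos (Real.exp_pos _)]
  refine ENNReal.ofReal_le_ofReal ?_
  rw [div_le_iff₀ (Real.exp_pos _), ← Real.exp_add]
  have hsqrt5 : Real.sqrt 5 ≤ Real.exp 1 := by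
    have h5 : (5:ℝ) ≤ (Real.exp 1)^2 := by nlinarith [Real.exp_one_gt_d9]
    calc Real.sqrt 5 ≤ Real.sqrt ((Real.exp 1)^2) := Real.sqrt_le_sqrt h5
      _ = Real.exp 1 := Real.sqrt_sq (Real.exp_pos 1).le
  calc Real.sqrt 5 ^ m ≤ Real.exp 1 ^ m := pow_le_pow_left₀ (Real.sqrt_nonneg 5) hsqrt5 m
    _ = Real.exp (m:ℝ) := Real.exp_one_pow m
    _ ≤ Real.exp (-(N:ℝ) + 2 * (N:ℝ)) := by
        rw [Real.exp_le_exp]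
        have hmN : (m:ℝ) ≤ (N:ℝ) := Nat.cast_le.mpr hm
        linarith

lemma pi_eval_ne_zero_null {ι : Type*} [Fintype ι] (V : ι → ℝ≥0) (i0 : ι) (h : V i0 = 0) :
    Measure.pi (fun i => gaussianReal 0 (V i)) {x : ι → ℝ | x i0 ≠ 0} = 0 := by
  have h0 : (gaussianReal 0 (V i0)) {y : ℝ | y ≠ 0} = 0 := by
    rw [h, gaussianReal_zero_var]
    rw [show {y : ℝ | y ≠ 0} = ({0}ᶜ : Set ℝ) from rfl,
      Measure.dirac_apply' _ (measurableSet_singleton (0:ℝ)).compl]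
    simp
  exact MeasureTheory.Measure.pi_eval_preimage_null (μ := fun i => gaussianReal 0 (V i)) (i := i0) h0

def stSet (d : ℕ) (t : Fin d) : Finset {s : Fin d // 1 ≤ s.val} :=
  univ.filter (fun s => t.val < s.1.val)

lemma stSet_card (d : ℕ) (t : Fin d) : (stSet d t).card = d - 1 - t.val := by
  have hb : (stSet d t).card = (univ.filter (fun s : Fin d => t < s)).card := by
    refine Finset.card_bij' (fun s _ => s.1) (fun b hb => ⟨b, ?_⟩) ?_ ?_ ?_ ?_
    · simp only [Finset.mem_filter, Finset.mem_univ, true_and, Fin.lt_def] at hb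
      omega
    · intro a ha
      simp only [stSet, Finset.mem_filter, Finset.mem_univ, true_and] at ha
      simp only [Finset.mem_filter, Finset.mem_univ, true_and, Fin.lt_def]
      exact ha
    · intro b hb
      simp only [Finset.mem_filter, Finset.mem_univ, true_and, Fin.lt_def] at hb
      simp only [stSet, Finset.mem_filter, Finset.mem_univ, true_and]
      exact hb
    · intro a ha; rfl
    · intro b hb; rfl
  rw [hb, Finset.filter_lt_eq_Ioi, Fin.card_Ioi]

lemma stSet_card_real (d : ℕ) (t : Fin d) :
    (((stSet d t).card : ℕ) : ℝ) = (d:ℝ) - 1 - (t.val:ℝ) := by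
  have h := stSet_card d t
  have ht := t.isLt
  have h2 : (stSet d t).card + t.val + 1 = d := by omega
  have h3 := congrArg (Nat.cast : ℕ → ℝ) h2
  push_cast at h3
  linarith

def esFun (d : ℕ) (t : Fin d) : Fin (stSet d t).card → {s : Fin d // 1 ≤ s.val} :=
  fun a => ((stSet d t).equivFin.symm a).1

lemma esFun_injective (d : ℕ) (t : Fin d) : Function.Injective (esFun d t) :=
  fun a b h => (stSet d t).equivFin.symm.injective (Subtype.val_injective h)

lemma sum_esFun (d : ℕ) (t : Fin d) (f : {s : Fin d // 1 ≤ s.val} → ℝ) :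
    ∑ a : Fin (stSet d t).card, f (esFun d t a) = ∑ s ∈ stSet d t, f s := by
  rw [← Finset.sum_coe_sort (stSet d t) f]
  exact Fintype.sum_equiv (stSet d t).equivFin.symm _ _ (fun a => rfl)

lemma sum_sq_mulVec {n1 r : ℕ} (U : Matrix (Fin n1) (Fin r) ℝ) (hU : Uᵀ * U = 1)
    (vv : Fin r → ℝ) :
    ∑ i, (U.mulVec vv i)^2 = ∑ l, (vv l)^2 := by
  have h1 : ∑ i, (U.mulVec vv i)^2 = (U.mulVec vv) ⬝ᵥ (U.mulVec vv) := by
    simp [dotProduct, sq]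
  have h2 : vv ⬝ᵥ vv = ∑ l, (vv l)^2 := by simp [dotProduct, sq]
  rw [h1, ← h2]
  calc (U.mulVec vv) ⬝ᵥ (U.mulVec vv) = (vv ᵥ* Uᵀ) ⬝ᵥ U.mulVec vv := by
        rw [Matrix.vecMul_transpose]
    _ = vv ⬝ᵥ Uᵀ.mulVec (U.mulVec vv) := (Matrix.dotProduct_mulVec vv Uᵀ (U.mulVec vv)).symm
    _ = vv ⬝ᵥ (Uᵀ * U).mulVec vv := by rw [Matrix.mulVec_mulVec]
    _ = vv ⬝ᵥ vv := by rw [hU, Matrix.one_mulVec]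


end NoiseAux

lemma measurable_sum_sq' {ι : Type*} [Fintype ι] {m k : ℕ} (e : Fin m × Fin k → ι) :
    Measurable fun x : ι → ℝ => ∑ l : Fin m, (∑ s : Fin k, x (e (l, s)))^2 := by
  have h1 : ∀ l : Fin m, Measurable (fun x : ι → ℝ => ∑ s : Fin k, x (e (l, s))) :=
    fun l => Finset.measurable_sum _ fun s _ => measurable_pi_apply _
  exact Finset.measurable_sum _ fun l _ => (h1 l).pow_const 2

set_option maxHeartbeats 1000000 in
/-- Column-wise second moment bound for the noise matrices
`F^t = U (Σ_{s>t} ε^s)ᵀ + Z^t`. -/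
theorem noise_matrix_column_sums_bound
    (Ω : Type) [MeasureSpace Ω] [IsProbabilityMeasure (ℙ : Measure Ω)]
    (d n1 n2 r : ℕ) (σ1 σ2 : ℝ≥0)
    (U : Matrix (Fin n1) (Fin r) ℝ)
    (hU : Uᵀ * U = 1)
    (ε : {t : Fin d // 1 ≤ t.val} → Ω → Matrix (Fin n2) (Fin r) ℝ)
    (Z : Fin d → Ω → Matrix (Fin n1) (Fin n2) ℝ)
    -- the Gaussian sources are mutually independent with the stated variances
    (hGauss : Measure.map (fun ω =>
        (Sum.elim (fun q : {t : Fin d // 1 ≤ t.val} × Fin n2 × Fin r => ε q.1 ω q.2.1 q.2.2)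
          (fun q : Fin d × Fin n1 × Fin n2 => Z q.1 ω q.2.1 q.2.2) :
          NoiseGaussIdx d n1 n2 r → ℝ)) ℙ
      = Measure.pi (fun g => gaussianReal 0 (noiseGaussVar d n1 n2 r σ1 σ2 g)))
    (F : Fin d → Ω → Matrix (Fin n1) (Fin n2) ℝ)
    (hF : ∀ t ω, F t ω = U * (∑ s : {s : Fin d // 1 ≤ s.val},
        if t.val < s.1.val then ε s ω else 0)ᵀ + Z t ω)
    (w : Fin d → ℝ) (hw : ∀ t, 0 ≤ w t) :
    1 - 2 * d * (n2 : ℝ) * Real.exp (-(n1 : ℝ)) ≤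
      (ℙ {ω | ∀ j : Fin n2,
        (∑ t, (w t) ^ 2 * ∑ i, (F t ω i j) ^ 2) ≤
          10 * (n1 : ℝ) * ∑ t : Fin d, (w t) ^ 2 * ((σ1 : ℝ) ^ 2 +
            ((d : ℝ) - 1 - (t.val : ℝ)) * (σ2 : ℝ) ^ 2)}).toReal := by
  classical
  set V : NoiseGaussIdx d n1 n2 r → ℝ≥0 := noiseGaussVar d n1 n2 r σ1 σ2 with hVdef
  set G : Ω → NoiseGaussIdx d n1 n2 r → ℝ := fun ω =>
    Sum.elim (fun q : {t : Fin d // 1 ≤ t.val} × Fin n2 × Fin r => ε q.1 ω q.2.1 q.2.2)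
      (fun q : Fin d × Fin n1 × Fin n2 => Z q.1 ω q.2.1 q.2.2) with hGdef
  have hmap : Measure.map G ℙ = Measure.pi (fun g => gaussianReal 0 (V g)) := hGauss
  haveI hμprob : IsProbabilityMeasure (Measure.pi (fun g => gaussianReal 0 (V g))) := by
    constructor
    rw [Measure.pi_univ]
    simp
  have hGae : AEMeasurable G ℙ := by
    by_contra hc
    have h0 : Measure.map G ℙ = 0 := Measure.map_of_not_aemeasurable hc
    have h1 : Measure.pi (fun g => gaussianReal 0 (V g)) Set.univ = 1 := measure_univ
    rw [← hmap, h0] at h1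
    simp at h1
  have hrn : r ≤ n1 := by
    have h1 : (1 : Matrix (Fin r) (Fin r) ℝ).rank = r := by
      rw [Matrix.rank_one]; simp
    have h2 := Matrix.rank_mul_le_right Uᵀ U
    have h3 := Matrix.rank_le_card_height U
    rw [hU, h1] at h2
    simpa using h2.trans h3
  -- key per-(t,j) bound
  have key : ∀ (t : Fin d) (j : Fin n2), ∃ B : Set (NoiseGaussIdx d n1 n2 r → ℝ),
      MeasurableSet B ∧
      Measure.pi (fun g => gaussianReal 0 (V g)) B
        ≤ 2 * ENNReal.ofReal (Real.exp (-(n1:ℝ))) ∧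
      ∀ x, x ∉ B →
        (∑ i : Fin n1, (x (Sum.inr (t, i, j)))^2 ≤ 5*(n1:ℝ)*(σ1:ℝ)^2) ∧
        (∑ l : Fin r, (∑ s ∈ NoiseAux.stSet d t, x (Sum.inl (s, j, l)))^2
          ≤ 5*(n1:ℝ)*((((NoiseAux.stSet d t).card):ℝ)*(σ2:ℝ)^2)) := by
    intro t j
    refine ⟨{x : NoiseGaussIdx d n1 n2 r → ℝ |
          5 * ((n1:ℕ):ℝ) * (((1:ℕ):ℝ) * ((σ1^2 : ℝ≥0):ℝ))
            < ∑ l : Fin n1, (∑ s : Fin 1, x (Sum.inr (t, l, j)))^2}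
        ∪ {x : NoiseGaussIdx d n1 n2 r → ℝ |
          5 * ((n1:ℕ):ℝ) * (((((NoiseAux.stSet d t).card):ℕ):ℝ) * ((σ2^2 : ℝ≥0):ℝ))
            < ∑ l : Fin r, (∑ a : Fin (NoiseAux.stSet d t).card,
                x (Sum.inl (NoiseAux.esFun d t a, j, l)))^2}, ?_, ?_, ?_⟩
    · refine MeasurableSet.union ?_ ?_
      · exact measurableSet_lt measurable_const
          (measurable_sum_sq' (fun p : Fin n1 × Fin 1 => Sum.inr (t, p.1, j)))
      · exact measurableSet_lt measurable_const
          (measurable_sum_sq' (fun p : Fin r × Fin (NoiseAux.stSet d t).card =>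
            Sum.inl (NoiseAux.esFun d t p.2, j, p.1)))
    · refine le_trans (measure_union_le _ _) ?_
      rw [two_mul]
      refine add_le_add ?_ ?_
      · -- E1 bound
        by_cases hσ1 : (σ1^2 : ℝ≥0) = 0
        · have hsub : {x : NoiseGaussIdx d n1 n2 r → ℝ |
              5 * ((n1:ℕ):ℝ) * (((1:ℕ):ℝ) * ((σ1^2 : ℝ≥0):ℝ))
                < ∑ l : Fin n1, (∑ s : Fin 1, x (Sum.inr (t, l, j)))^2}
              ⊆ ⋃ i : Fin n1, {x : NoiseGaussIdx d n1 n2 r → ℝ |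
                  x (Sum.inr (t, i, j)) ≠ 0} := by
            intro x hx
            simp only [Set.mem_setOf_eq] at hx
            by_contra hcon
            simp only [Set.mem_iUnion, Set.mem_setOf_eq, not_exists, not_not] at hcon
            rw [hσ1] at hx
            rw [Finset.sum_congr rfl (fun l _ => by
              rw [show (∑ s : Fin 1, x (Sum.inr (t, l, j))) = 0 by simp [hcon l]])] at hx
            simp at hx
          refine le_trans (measure_mono hsub) ?_
          rw [measure_iUnion_null fun i =>
            NoiseAux.pi_eval_ne_zero_null V (Sum.inr (t, i, j)) hσ1]
          exact zero_le
        · exact NoiseAux.gauss_tail V (σ1^2) hσ1 n1 1 n1 one_pos le_rfl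
            (fun p => Sum.inr (t, p.1, j))
            (fun p q h => by
              simp only [Sum.inr.injEq, Prod.mk.injEq] at h
              exact Prod.ext h.2.1 (Subsingleton.elim _ _))
            (fun p => rfl)
      · -- E2 bound
        by_cases hk0 : (NoiseAux.stSet d t).card = 0
        · have hempty : {x : NoiseGaussIdx d n1 n2 r → ℝ |
              5 * ((n1:ℕ):ℝ) * (((((NoiseAux.stSet d t).card):ℕ):ℝ) * ((σ2^2 : ℝ≥0):ℝ))
                < ∑ l : Fin r, (∑ a : Fin (NoiseAux.stSet d t).card,
                    x (Sum.inl (NoiseAux.esFun d t a, j, l)))^2} = ∅ := by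
            ext x
            simp only [Set.mem_setOf_eq, Set.mem_empty_iff_false, iff_false, not_lt]
            haveI : IsEmpty (Fin (NoiseAux.stSet d t).card) := by
              rw [hk0]; infer_instance
            rw [Finset.sum_congr rfl (fun l _ => by
              rw [show (∑ a : Fin (NoiseAux.stSet d t).card,
                  x (Sum.inl (NoiseAux.esFun d t a, j, l))) = 0 by
                rw [Finset.univ_eq_empty, Finset.sum_empty]])]
            simp [hk0]
          rw [hempty]
          simp
        · by_cases hσ2 : (σ2^2 : ℝ≥0) = 0
          · have hsub : {x : NoiseGaussIdx d n1 n2 r → ℝ |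
                5 * ((n1:ℕ):ℝ) * (((((NoiseAux.stSet d t).card):ℕ):ℝ) * ((σ2^2 : ℝ≥0):ℝ))
                  < ∑ l : Fin r, (∑ a : Fin (NoiseAux.stSet d t).card,
                      x (Sum.inl (NoiseAux.esFun d t a, j, l)))^2}
                ⊆ ⋃ l : Fin r, ⋃ a : Fin (NoiseAux.stSet d t).card,
                    {x : NoiseGaussIdx d n1 n2 r → ℝ |
                      x (Sum.inl (NoiseAux.esFun d t a, j, l)) ≠ 0} := by
              intro x hx
              simp only [Set.mem_setOf_eq] at hx
              by_contra hcon
              simp only [Set.mem_iUnion, Set.mem_setOf_eq, not_exists, not_not] at hcon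
              rw [hσ2] at hx
              rw [Finset.sum_congr rfl (fun l _ => by
                rw [show (∑ a : Fin (NoiseAux.stSet d t).card,
                    x (Sum.inl (NoiseAux.esFun d t a, j, l))) = 0 from
                  Finset.sum_eq_zero fun a _ => hcon l a])] at hx
              simp at hx
            refine le_trans (measure_mono hsub) ?_
            rw [measure_iUnion_null fun l => measure_iUnion_null fun a =>
              NoiseAux.pi_eval_ne_zero_null V
                (Sum.inl (NoiseAux.esFun d t a, j, l)) hσ2]
            exact zero_le
          · exact NoiseAux.gauss_tail V (σ2^2) hσ2 r ((NoiseAux.stSet d t).card) n1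
              (Nat.pos_of_ne_zero hk0) hrn
              (fun p => Sum.inl (NoiseAux.esFun d t p.2, j, p.1))
              (fun p q h => by
                simp only [Sum.inl.injEq, Prod.mk.injEq] at h
                exact Prod.ext h.2.2 (NoiseAux.esFun_injective d t h.1))
              (fun p => rfl)
    · intro x hx
      have hx1 : ¬ (5 * ((n1:ℕ):ℝ) * (((1:ℕ):ℝ) * ((σ1^2 : ℝ≥0):ℝ))
          < ∑ l : Fin n1, (∑ s : Fin 1, x (Sum.inr (t, l, j)))^2) :=
        fun h => hx (Or.inl h)
      have hx2 : ¬ (5 * ((n1:ℕ):ℝ) * (((((NoiseAux.stSet d t).card):ℕ):ℝ) * ((σ2^2 : ℝ≥0):ℝ))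
          < ∑ l : Fin r, (∑ a : Fin (NoiseAux.stSet d t).card,
              x (Sum.inl (NoiseAux.esFun d t a, j, l)))^2) :=
        fun h => hx (Or.inr h)
      constructor
      · have h1 := not_lt.mp hx1
        have h2 : ∑ l : Fin n1, (∑ s : Fin 1, x (Sum.inr (t, l, j)))^2
            = ∑ i : Fin n1, (x (Sum.inr (t, i, j)))^2 :=
          Finset.sum_congr rfl fun l _ => by simp
        rw [h2] at h1
        refine le_trans h1 (le_of_eq ?_)
        push_cast
        ring
      · have h1 := not_lt.mp hx2
        have h2 : ∑ l : Fin r, (∑ a : Fin (NoiseAux.stSet d t).card,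
              x (Sum.inl (NoiseAux.esFun d t a, j, l)))^2
            = ∑ l : Fin r, (∑ s ∈ NoiseAux.stSet d t, x (Sum.inl (s, j, l)))^2 :=
          Finset.sum_congr rfl fun l _ => by
            rw [NoiseAux.sum_esFun d t (fun s => x (Sum.inl (s, j, l)))]
        rw [h2] at h1
        refine le_trans h1 (le_of_eq ?_)
        push_cast
        ring
  choose B hBmeas hBle hBout using key
  -- the good-event implication
  have hmain : ∀ ω, (∀ (t : Fin d) (j : Fin n2), G ω ∉ B t j) → ∀ j : Fin n2,
      (∑ t, (w t) ^ 2 * ∑ i, (F t ω i j) ^ 2) ≤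
        10 * (n1 : ℝ) * ∑ t : Fin d, (w t) ^ 2 * ((σ1 : ℝ) ^ 2 +
          ((d : ℝ) - 1 - (t.val : ℝ)) * (σ2 : ℝ) ^ 2) := by
    intro ω hω j
    have hper : ∀ t : Fin d, ∑ i, (F t ω i j)^2
        ≤ 10*(n1:ℝ)*((σ1:ℝ)^2 + (((NoiseAux.stSet d t).card):ℝ)*(σ2:ℝ)^2) := by
      intro t
      obtain ⟨hz, hv⟩ := hBout t j (G ω) (hω t j)
      have hz' : ∑ i, (Z t ω i j)^2 ≤ 5*(n1:ℝ)*(σ1:ℝ)^2 := hz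
      have hv' : ∑ l : Fin r, (∑ s ∈ NoiseAux.stSet d t, ε s ω j l)^2
          ≤ 5*(n1:ℝ)*((((NoiseAux.stSet d t).card):ℝ)*(σ2:ℝ)^2) := hv
      have hM : ∀ l, (∑ s : {s : Fin d // 1 ≤ s.val},
            if t.val < s.1.val then ε s ω else 0) j l
          = ∑ s ∈ NoiseAux.stSet d t, ε s ω j l := by
        intro l
        rw [Matrix.sum_apply]
        simp only [NoiseAux.stSet, Finset.sum_filter]
        refine Finset.sum_congr rfl fun s _ => ?_
        by_cases hts : t.val < s.1.val
        · simp [hts]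
        · simp [hts]
      have hFij : ∀ i, F t ω i j
          = U.mulVec (fun l => ∑ s ∈ NoiseAux.stSet d t, ε s ω j l) i + Z t ω i j := by
        intro i
        rw [hF t ω]
        simp only [Matrix.add_apply]
        congr 1
        rw [Matrix.mul_apply]
        simp only [Matrix.mulVec, dotProduct]
        refine Finset.sum_congr rfl fun l _ => ?_
        congr 1
        rw [Matrix.transpose_apply, hM l]
      calc ∑ i, (F t ω i j)^2
          = ∑ i, (U.mulVec (fun l => ∑ s ∈ NoiseAux.stSet d t, ε s ω j l) i + Z t ω i j)^2 :=
            Finset.sum_congr rfl fun i _ => by rw [hFij i]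
        _ ≤ ∑ i, (2*(U.mulVec (fun l => ∑ s ∈ NoiseAux.stSet d t, ε s ω j l) i)^2
              + 2*(Z t ω i j)^2) :=
            Finset.sum_le_sum fun i _ => by
              nlinarith [sq_nonneg
                (U.mulVec (fun l => ∑ s ∈ NoiseAux.stSet d t, ε s ω j l) i - Z t ω i j)]
        _ = 2*(∑ l, (∑ s ∈ NoiseAux.stSet d t, ε s ω j l)^2) + 2*∑ i, (Z t ω i j)^2 := by
            rw [Finset.sum_add_distrib, ← Finset.mul_sum, ← Finset.mul_sum,
              NoiseAux.sum_sq_mulVec U hU]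
        _ ≤ 2*(5*(n1:ℝ)*((((NoiseAux.stSet d t).card):ℝ)*(σ2:ℝ)^2))
              + 2*(5*(n1:ℝ)*(σ1:ℝ)^2) := by
            exact add_le_add (by linarith) (by linarith)
        _ = 10*(n1:ℝ)*((σ1:ℝ)^2 + (((NoiseAux.stSet d t).card):ℝ)*(σ2:ℝ)^2) := by ring
    calc (∑ t, (w t)^2 * ∑ i, (F t ω i j)^2)
        ≤ ∑ t, (w t)^2
            * (10*(n1:ℝ)*((σ1:ℝ)^2 + (((NoiseAux.stSet d t).card):ℝ)*(σ2:ℝ)^2)) :=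
          Finset.sum_le_sum fun t _ => mul_le_mul_of_nonneg_left (hper t) (sq_nonneg _)
      _ = 10*(n1:ℝ)*∑ t : Fin d, (w t)^2*((σ1:ℝ)^2
            + ((d:ℝ)-1-(t.val:ℝ))*(σ2:ℝ)^2) := by
          rw [Finset.mul_sum]
          refine Finset.sum_congr rfl fun t _ => ?_
          rw [← NoiseAux.stSet_card_real d t]
          ring
  -- probability bookkeeping
  set T : Set Ω := {ω | ∀ j : Fin n2,
      (∑ t, (w t) ^ 2 * ∑ i, (F t ω i j) ^ 2) ≤
        10 * (n1 : ℝ) * ∑ t : Fin d, (w t) ^ 2 * ((σ1 : ℝ) ^ 2 +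
          ((d : ℝ) - 1 - (t.val : ℝ)) * (σ2 : ℝ) ^ 2)} with hT
  set Bad : Set Ω := ⋃ t : Fin d, ⋃ j : Fin n2, G ⁻¹' (B t j) with hBad
  have hUT : (Set.univ : Set Ω) ⊆ T ∪ Bad := by
    intro ω _
    by_cases hb : ω ∈ Bad
    · exact Or.inr hb
    · refine Or.inl ?_
      have hω : ∀ (t : Fin d) (j : Fin n2), G ω ∉ B t j := by
        intro t j hmem
        exact hb (Set.mem_iUnion.mpr ⟨t, Set.mem_iUnion.mpr ⟨j, hmem⟩⟩)
      exact hmain ω hω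
  have hBadle : ℙ Bad ≤ (d : ℝ≥0∞) * ((n2 : ℝ≥0∞)
      * (2 * ENNReal.ofReal (Real.exp (-(n1:ℝ))))) := by
    calc ℙ Bad ≤ ∑ t : Fin d, ℙ (⋃ j : Fin n2, G ⁻¹' (B t j)) :=
          measure_iUnion_fintype_le _ _
      _ ≤ ∑ t : Fin d, ∑ j : Fin n2, ℙ (G ⁻¹' (B t j)) :=
          Finset.sum_le_sum fun t _ => measure_iUnion_fintype_le _ _
      _ ≤ ∑ t : Fin d, ∑ j : Fin n2, (2 * ENNReal.ofReal (Real.exp (-(n1:ℝ)))) := by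
          refine Finset.sum_le_sum fun t _ => Finset.sum_le_sum fun j _ => ?_
          rw [← Measure.map_apply_of_aemeasurable hGae (hBmeas t j), hmap]
          exact hBle t j
      _ = (d : ℝ≥0∞) * ((n2 : ℝ≥0∞) * (2 * ENNReal.ofReal (Real.exp (-(n1:ℝ))))) := by
          simp [Finset.sum_const, Finset.card_univ, nsmul_eq_mul, mul_assoc]
  have h1 : (1:ℝ≥0∞) ≤ ℙ T + ℙ Bad :=
    calc (1:ℝ≥0∞) = ℙ (Set.univ : Set Ω) := measure_univ.symm
      _ ≤ ℙ (T ∪ Bad) := measure_mono hUT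
      _ ≤ ℙ T + ℙ Bad := measure_union_le _ _
  have hTne : ℙ T ≠ ⊤ := measure_ne_top _ _
  have hBne : ℙ Bad ≠ ⊤ := measure_ne_top _ _
  have h2 : (1:ℝ) ≤ (ℙ T).toReal + (ℙ Bad).toReal := by
    have h3 := ENNReal.toReal_mono (ENNReal.add_ne_top.mpr ⟨hTne, hBne⟩) h1
    rwa [ENNReal.toReal_one, ENNReal.toReal_add hTne hBne] at h3
  have h4 : (ℙ Bad).toReal ≤ 2*(d:ℝ)*(n2:ℝ)*Real.exp (-(n1:ℝ)) := by
    have hfin : (d : ℝ≥0∞) * ((n2 : ℝ≥0∞)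
        * (2 * ENNReal.ofReal (Real.exp (-(n1:ℝ))))) ≠ ⊤ := by
      refine ENNReal.mul_ne_top (ENNReal.natCast_ne_top d) ?_
      refine ENNReal.mul_ne_top (ENNReal.natCast_ne_top n2) ?_
      exact ENNReal.mul_ne_top (by norm_num) ENNReal.ofReal_ne_top
    have h5 := ENNReal.toReal_mono hfin hBadle
    rw [ENNReal.toReal_mul, ENNReal.toReal_mul, ENNReal.toReal_mul] at h5
    simp only [ENNReal.toReal_natCast, ENNReal.toReal_ofNat,
      ENNReal.toReal_ofReal (Real.exp_nonneg _)] at h5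
    linarith
  linarith
end
end
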